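/- arXiv:math/0006125 — 9 statements merged into one kernel-verified Lean document; each statement's English description precedes it below -/
import Mathlib

section
/- Let U ⊆ ℝⁿ × ℝ be open with coordinates (x¹,…,xⁿ,v), and let W : U → ℝ be smooth with ∂W/∂v ≠ 0 everywhere on U. Define b_k := −(∂W/∂x^k)/(∂W/∂v) for k = 1,…,n. Then the functions b₁,…,bₙ satisfy ∂b_r/∂x^s + b_s·∂b_r/∂v = ∂b_s/∂x^r + b_r·∂b_s/∂v for all r, s = 1,…,n. -/
/-- Partial derivative in the direction of the `i`-th space coordinate `xⁱ`
on `ℝⁿ × ℝ` (coordinates `(x¹, …, xⁿ, v)`). -/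
noncomputable def pdx {n : ℕ} (i : Fin n) (f : EuclideanSpace ℝ (Fin n) × ℝ → ℝ)
    (p : EuclideanSpace ℝ (Fin n) × ℝ) : ℝ :=
  fderiv ℝ f p (EuclideanSpace.single i 1, 0)

/-- Partial derivative in the direction of the velocity coordinate `v` on `ℝⁿ × ℝ`. -/
noncomputable def pdv {n : ℕ} (f : EuclideanSpace ℝ (Fin n) × ℝ → ℝ)
    (p : EuclideanSpace ℝ (Fin n) × ℝ) : ℝ :=
  fderiv ℝ f p (0, 1)

/-- sufficiency direction of Theorem 7.1, effective form (9.3).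
If `W` is smooth on an open `U ⊆ ℝⁿ × ℝ` with `∂W/∂v ≠ 0` on `U`, then
`b_k = −(∂W/∂x^k)/(∂W/∂v)` solves the reduced normality equations (7.2). -/
theorem stmt4 {n : ℕ} (U : Set (EuclideanSpace ℝ (Fin n) × ℝ)) (hU : IsOpen U)
    (W : EuclideanSpace ℝ (Fin n) × ℝ → ℝ) (hW : ContDiffOn ℝ (⊤ : ℕ∞) W U)
    (hWv : ∀ p ∈ U, pdv W p ≠ 0)
    (b : Fin n → EuclideanSpace ℝ (Fin n) × ℝ → ℝ)
    (hb : ∀ k, ∀ p, b k p = -(pdx k W p) / pdv W p) :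
    ∀ p ∈ U, ∀ r s : Fin n,
      pdx s (b r) p + b s p * pdv (b r) p = pdx r (b s) p + b r p * pdv (b s) p := by
  intro p hp r s
  have hWp : ContDiffAt ℝ (⊤ : ℕ∞) W p := hW.contDiffAt (hU.mem_nhds hp)
  -- The derivative of `fderiv ℝ W` at `p` (the second derivative).
  have hW1 : ContDiffAt ℝ 1 (fderiv ℝ W) p := hWp.fderiv_right (WithTop.coe_le_coe.mpr le_top)
  have hDW : DifferentiableAt ℝ (fderiv ℝ W) p := hW1.differentiableAt one_ne_zero
  set L := fderiv ℝ (fderiv ℝ W) p with hL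
  have hLsymm : ∀ v w, L v w = L w v := hWp.isSymmSndFDerivAt (by rw [minSmoothness_of_isRCLikeNormedField]; exact WithTop.coe_le_coe.mpr (le_top : ((2 : ℕ∞)) ≤ ⊤))
  have hL' : HasFDerivAt (fderiv ℝ W) L p := hDW.hasFDerivAt
  -- vectors
  set Er : EuclideanSpace ℝ (Fin n) × ℝ := (EuclideanSpace.single r 1, 0)
  set Es : EuclideanSpace ℝ (Fin n) × ℝ := (EuclideanSpace.single s 1, 0)
  set Ev : EuclideanSpace ℝ (Fin n) × ℝ := (0, 1)
  -- partial derivative functions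
  have hg : ∀ u : EuclideanSpace ℝ (Fin n) × ℝ,
      HasFDerivAt (fun q => fderiv ℝ W q u)
        ((ContinuousLinearMap.apply ℝ ℝ u).comp L) p := fun u =>
    (ContinuousLinearMap.apply ℝ ℝ u).hasFDerivAt.comp p hL'
  have hWv' : fderiv ℝ W p Ev ≠ 0 := hWv p hp
  -- derivative of b k
  have hbk : ∀ u : EuclideanSpace ℝ (Fin n) × ℝ, ∀ k : Fin n,
      fderiv ℝ (b k) p u =
        ((fderiv ℝ W p Ev) * (-(L u (EuclideanSpace.single k 1, 0)))
          - (-(fderiv ℝ W p (EuclideanSpace.single k 1, 0))) * (L u Ev))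
          / ((fderiv ℝ W p Ev) ^ 2) := by
    intro u k
    set Ek : EuclideanSpace ℝ (Fin n) × ℝ := (EuclideanSpace.single k 1, 0)
    have hc : HasFDerivAt (fun q => -(fderiv ℝ W q Ek))
        (-((ContinuousLinearMap.apply ℝ ℝ Ek).comp L)) p := (hg Ek).neg
    have hinv : HasFDerivAt (fun q => (fderiv ℝ W q Ev)⁻¹)
        ((-((fderiv ℝ W p Ev) ^ 2)⁻¹) • ((ContinuousLinearMap.apply ℝ ℝ Ev).comp L)) p :=
      HasDerivAt.comp_hasFDerivAt p (hasDerivAt_inv hWv') (hg Ev)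
    have hdiv := hc.mul hinv
    have hbkfun : b k = fun q => -(fderiv ℝ W q Ek) * (fderiv ℝ W q Ev)⁻¹ := by
      funext q; rw [hb k q, div_eq_mul_inv]; rfl
    rw [hbkfun, HasFDerivAt.fderiv (f := fun q => -(fderiv ℝ W q Ek) * (fderiv ℝ W q Ev)⁻¹) hdiv]
    simp only [ContinuousLinearMap.add_apply, ContinuousLinearMap.smul_apply,
      ContinuousLinearMap.comp_apply, ContinuousLinearMap.apply_apply,
      ContinuousLinearMap.neg_apply, smul_eq_mul]
    field_simp
    try ring
  -- abbreviations
  have e1 := hbk Es r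
  have e2 := hbk Ev r
  have e3 := hbk Er s
  have e4 := hbk Ev s
  simp only [pdx, pdv] at *
  rw [hb r p, hb s p, e1, e2, e3, e4]
  have s1 : L Es Er = L Er Es := hLsymm Es Er
  have s2 : L Ev Er = L Er Ev := hLsymm Ev Er
  have s3 : L Ev Es = L Es Ev := hLsymm Ev Es
  rw [show ((0, 1) : EuclideanSpace ℝ (Fin n) × ℝ) = Ev from rfl,
    show ((EuclideanSpace.single r 1, 0) : EuclideanSpace ℝ (Fin n) × ℝ) = Er from rfl,
    show ((EuclideanSpace.single s 1, 0) : EuclideanSpace ℝ (Fin n) × ℝ) = Es from rfl]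
  field_simp
  ring_nf
  rw [s1, s2, s3]
end

section
/- Let U ⊆ ℝⁿ × ℝ be open with coordinates (x¹,…,xⁿ,v), let W : U → ℝ be smooth with ∂W/∂v ≠ 0 everywhere on U, define b_k := −(∂W/∂x^k)/(∂W/∂v), and let h : ℝ → ℝ be smooth. Then the function a := h(W)/(∂W/∂v) satisfies ∂a/∂x^s + b_s·∂a/∂v = a·∂b_s/∂v for all s = 1,…,n. -/
/-- Directional derivative of a quotient. -/
lemma fderiv_div_apply {E : Type*} [NormedAddCommGroup E] [NormedSpace ℝ E]
    {c d : E → ℝ} {x : E} (hc : DifferentiableAt ℝ c x) (hd : DifferentiableAt ℝ d x)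
    (hx : d x ≠ 0) (u : E) :
    fderiv ℝ (fun y => c y / d y) x u
      = (fderiv ℝ c x u * d x - c x * fderiv ℝ d x u) / d x ^ 2 := by
  have hinv : HasFDerivAt (fun y => (d y)⁻¹)
      ((-(d x ^ 2)⁻¹ : ℝ) • fderiv ℝ d x) x :=
    (hasDerivAt_inv hx).comp_hasFDerivAt x hd.hasFDerivAt
  have hmul : HasFDerivAt (fun y => c y * (d y)⁻¹)
      (c x • ((-(d x ^ 2)⁻¹ : ℝ) • fderiv ℝ d x) + (d x)⁻¹ • fderiv ℝ c x) x :=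
    hc.hasFDerivAt.mul hinv
  have : fderiv ℝ (fun y => c y / d y) x
      = c x • ((-(d x ^ 2)⁻¹ : ℝ) • fderiv ℝ d x) + (d x)⁻¹ • fderiv ℝ c x := by
    simpa [div_eq_mul_inv] using hmul.fderiv
  rw [this]
  simp only [ContinuousLinearMap.add_apply, ContinuousLinearMap.smul_apply, smul_eq_mul]
  field_simp
  ring

/-- sufficiency direction of Theorem 7.2, effective form (9.4).
With `b_k = −(∂W/∂x^k)/(∂W/∂v)` built from a smooth `W` with `∂W/∂v ≠ 0` on an open
`U ⊆ ℝⁿ × ℝ`, the function `a = h(W)/(∂W/∂v)` solves equation (7.1):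
`∂a/∂x^s + b_s ∂a/∂v = a ∂b_s/∂v`. -/
theorem stmt6 {n : ℕ} (U : Set (EuclideanSpace ℝ (Fin n) × ℝ)) (hU : IsOpen U)
    (W : EuclideanSpace ℝ (Fin n) × ℝ → ℝ) (hW : ContDiffOn ℝ (⊤ : ℕ∞) W U)
    (hWv : ∀ p ∈ U, pdv W p ≠ 0)
    (h : ℝ → ℝ) (hh : ContDiff ℝ (⊤ : ℕ∞) h)
    (b : Fin n → EuclideanSpace ℝ (Fin n) × ℝ → ℝ)
    (hb : ∀ k, ∀ p, b k p = -(pdx k W p) / pdv W p)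
    (a : EuclideanSpace ℝ (Fin n) × ℝ → ℝ)
    (ha : ∀ p, a p = h (W p) / pdv W p) :
    ∀ p ∈ U, ∀ s : Fin n,
      pdx s a p + b s p * pdv a p = a p * pdv (b s) p := by
  intro p hp s
  set e : EuclideanSpace ℝ (Fin n) × ℝ := (EuclideanSpace.single s 1, 0) with he
  set ε : EuclideanSpace ℝ (Fin n) × ℝ := ((0 : EuclideanSpace ℝ (Fin n)), (1:ℝ)) with hε
  have hpU : U ∈ nhds p := hU.mem_nhds hp
  have hWat : ContDiffAt ℝ (⊤ : ℕ∞) W p := hW.contDiffAt hpU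
  have hWd : DifferentiableAt ℝ W p := hWat.differentiableAt (by simp)
  have hF : ContDiffAt ℝ (⊤ : ℕ∞) (fderiv ℝ W) p := hWat.fderiv_right (by simp)
  have hFd : DifferentiableAt ℝ (fderiv ℝ W) p := hF.differentiableAt (by simp)
  -- the scalar-valued first derivatives as functions
  set Wx : EuclideanSpace ℝ (Fin n) × ℝ → ℝ := fun q => fderiv ℝ W q e with hWx
  set Wv : EuclideanSpace ℝ (Fin n) × ℝ → ℝ := fun q => fderiv ℝ W q ε with hWvdef
  have hWxd : DifferentiableAt ℝ Wx p := hFd.clm_apply (differentiableAt_const _)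
  have hWvd : DifferentiableAt ℝ Wv p := hFd.clm_apply (differentiableAt_const _)
  -- second derivative
  set f'' := fderiv ℝ (fderiv ℝ W) p with hf''
  have hWxderiv : ∀ u, fderiv ℝ Wx p u = f'' u e := by
    intro u
    rw [hWx]
    rw [fderiv_clm_apply hFd (differentiableAt_const _)]
    simp [hf'']
  have hWvderiv : ∀ u, fderiv ℝ Wv p u = f'' u ε := by
    intro u
    rw [hWvdef]
    rw [fderiv_clm_apply hFd (differentiableAt_const _)]
    simp [hf'']
  -- symmetry of the second derivative
  have hsymm : f'' e ε = f'' ε e := by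
    apply second_derivative_symmetric_of_eventually (f := W) (f' := fderiv ℝ W) (x := p)
    · filter_upwards [hpU] with y hy
      exact (((hW.differentiableOn (by simp)) y hy).differentiableAt
        (hU.mem_nhds hy)).hasFDerivAt
    · exact hFd.hasFDerivAt
  -- abbreviations for values at p
  set A := Wx p with hA
  set B := Wv p with hB
  have hB0 : B ≠ 0 := hWv p hp
  set P := f'' e ε with hP
  set Q := f'' ε ε with hQ
  -- h ∘ W
  have hhd : DifferentiableAt ℝ (fun q => h (W q)) p :=
    (hh.differentiable (by simp) _).comp p hWd
  have hhderiv : ∀ u, fderiv ℝ (fun q => h (W q)) p u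
      = deriv h (W p) * fderiv ℝ W p u := by
    intro u
    have hc := ((hh.differentiable (by simp) (W p)).hasDerivAt).comp_hasFDerivAt p hWd.hasFDerivAt
    rw [show (fderiv ℝ (fun q => h (W q)) p) = deriv h (W p) • fderiv ℝ W p from hc.fderiv]
    simp [mul_comm]
  -- rewrite a and b as explicit functions
  have ha' : a = fun q => h (W q) / Wv q := by
    funext q; rw [ha q]; rfl
  have hb' : b s = fun q => (-(Wx q)) / Wv q := by
    funext q; rw [hb s q]; rfl
  -- compute the three partial derivatives
  have hax : pdx s a p = (deriv h (W p) * A * B - h (W p) * P) / B ^ 2 := by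
    show fderiv ℝ a p e = _
    rw [ha', fderiv_div_apply hhd hWvd hB0, hhderiv, hWvderiv]
  have hav : pdv a p = (deriv h (W p) * B * B - h (W p) * Q) / B ^ 2 := by
    show fderiv ℝ a p ε = _
    rw [ha', fderiv_div_apply hhd hWvd hB0, hhderiv, hWvderiv]
  have hbv : pdv (b s) p = ((-(f'' ε e)) * B - (-A) * Q) / B ^ 2 := by
    show fderiv ℝ (b s) p ε = _
    rw [hb', fderiv_div_apply (c := fun q => -Wx q) hWxd.neg hWvd hB0, hWvderiv]
    rw [fderiv_fun_neg]
    simp only [ContinuousLinearMap.neg_apply, hWxderiv]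
    rfl
  have hbp : b s p = -A / B := hb s p
  have hap : a p = h (W p) / B := ha p
  rw [hax, hav, hbv, hbp, hap, ← hsymm]
  field_simp
  ring
end

section
/- Let U ⊆ ℝⁿ × ℝ be open with coordinates (x¹,…,xⁿ,v), let W : U → ℝ be smooth with W_v := ∂W/∂v ≠ 0 everywhere on U, and define b_k := −(∂W/∂x^k)/W_v. A smooth function a : U → ℝ satisfies ∂a/∂x^s + b_s·∂a/∂v = a·∂b_s/∂v for all s = 1,…,n if and only if the function g := a·W_v satisfies ∂g/∂x^s + b_s·∂g/∂v = 0 for all s = 1,…,n. -/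
lemma hasFDerivAt_fderiv_apply {n : ℕ} {f : EuclideanSpace ℝ (Fin n) × ℝ → ℝ}
    {p : EuclideanSpace ℝ (Fin n) × ℝ} (hf : ContDiffAt ℝ (⊤ : ℕ∞) f p)
    (w : EuclideanSpace ℝ (Fin n) × ℝ) :
    HasFDerivAt (fun q => fderiv ℝ f q w)
      ((ContinuousLinearMap.apply ℝ ℝ w).comp (fderiv ℝ (fderiv ℝ f) p)) p := by
  have h1 : ContDiffAt ℝ (⊤ : ℕ∞) (fderiv ℝ f) p := hf.fderiv_right (by simp)
  have h2 : HasFDerivAt (fderiv ℝ f) (fderiv ℝ (fderiv ℝ f) p) p :=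
    (h1.differentiableAt (by simp)).hasFDerivAt
  exact ((ContinuousLinearMap.apply ℝ ℝ w).hasFDerivAt).comp p h2

lemma stmt7_key {n : ℕ} (U : Set (EuclideanSpace ℝ (Fin n) × ℝ)) (hU : IsOpen U)
    (W : EuclideanSpace ℝ (Fin n) × ℝ → ℝ) (hW : ContDiffOn ℝ (⊤ : ℕ∞) W U)
    (hWv : ∀ p ∈ U, pdv W p ≠ 0)
    (b : Fin n → EuclideanSpace ℝ (Fin n) × ℝ → ℝ)
    (hb : ∀ k, ∀ p, b k p = -(pdx k W p) / pdv W p)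
    (a : EuclideanSpace ℝ (Fin n) × ℝ → ℝ) (ha : ContDiffOn ℝ (⊤ : ℕ∞) a U)
    (g : EuclideanSpace ℝ (Fin n) × ℝ → ℝ) (hg : ∀ p, g p = a p * pdv W p)
    (p : EuclideanSpace ℝ (Fin n) × ℝ) (hp : p ∈ U) (s : Fin n) :
    pdx s g p + b s p * pdv g p
      = pdv W p * (pdx s a p + b s p * pdv a p - a p * pdv (b s) p) := by
  have hWp : ContDiffAt ℝ (⊤ : ℕ∞) W p := hW.contDiffAt (hU.mem_nhds hp)
  have hap : ContDiffAt ℝ (⊤ : ℕ∞) a p := ha.contDiffAt (hU.mem_nhds hp)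
  set es : EuclideanSpace ℝ (Fin n) × ℝ := (EuclideanSpace.single s 1, 0) with hes
  set ev : EuclideanSpace ℝ (Fin n) × ℝ := ((0 : EuclideanSpace ℝ (Fin n)), (1:ℝ)) with hev
  set f2 := fderiv ℝ (fderiv ℝ W) p with hf2
  have hsymm : IsSymmSndFDerivAt ℝ W p := hWp.isSymmSndFDerivAt (by rw [minSmoothness_of_isRCLikeNormedField]; exact WithTop.coe_le_coe.mpr le_top)
  have hFs : HasFDerivAt (fun q => fderiv ℝ W q es)
      ((ContinuousLinearMap.apply ℝ ℝ es).comp f2) p := hasFDerivAt_fderiv_apply hWp es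
  have hFv : HasFDerivAt (fun q => fderiv ℝ W q ev)
      ((ContinuousLinearMap.apply ℝ ℝ ev).comp f2) p := hasFDerivAt_fderiv_apply hWp ev
  have hWvne : fderiv ℝ W p ev ≠ 0 := hWv p hp
  have hinv : HasFDerivAt (fun q => (fderiv ℝ W q ev)⁻¹)
      ((ContinuousLinearMap.smulRight (1 : ℝ →L[ℝ] ℝ) (-((fderiv ℝ W p ev) ^ 2)⁻¹)).comp
        ((ContinuousLinearMap.apply ℝ ℝ ev).comp f2)) p :=
    (hasFDerivAt_inv hWvne).comp p hFv
  have hbfun : b s = fun q => -(fderiv ℝ W q es) * (fderiv ℝ W q ev)⁻¹ := by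
    funext q; rw [hb s q, div_eq_mul_inv]; rfl
  have hbderiv : HasFDerivAt (b s)
      ((-(fderiv ℝ W p es)) •
          ((ContinuousLinearMap.smulRight (1 : ℝ →L[ℝ] ℝ) (-((fderiv ℝ W p ev) ^ 2)⁻¹)).comp
            ((ContinuousLinearMap.apply ℝ ℝ ev).comp f2))
        + (fderiv ℝ W p ev)⁻¹ • (-((ContinuousLinearMap.apply ℝ ℝ es).comp f2))) p := by
    rw [hbfun]; exact hFs.neg.mul hinv
  have hgfun : g = fun q => a q * fderiv ℝ W q ev := by
    funext q; rw [hg q]; rfl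
  have haderiv : HasFDerivAt a (fderiv ℝ a p) p :=
    (hap.differentiableAt (by simp)).hasFDerivAt
  have hgderiv : HasFDerivAt g
      (a p • ((ContinuousLinearMap.apply ℝ ℝ ev).comp f2)
        + (fderiv ℝ W p ev) • fderiv ℝ a p) p := by
    rw [hgfun]; exact haderiv.mul hFv
  have h1 : pdv (b s) p
      = (-(fderiv ℝ W p es)) * (-((fderiv ℝ W p ev) ^ 2)⁻¹ * (f2 ev ev))
        + (fderiv ℝ W p ev)⁻¹ * (-(f2 ev es)) := by
    rw [pdv, hbderiv.fderiv]
    simp only [ContinuousLinearMap.add_apply, ContinuousLinearMap.coe_smul', Pi.smul_apply,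
      ContinuousLinearMap.coe_comp', Function.comp_apply, ContinuousLinearMap.smulRight_apply,
      ContinuousLinearMap.one_apply, ContinuousLinearMap.apply_apply,
      ContinuousLinearMap.neg_apply, smul_eq_mul]
    ring
  have h2 : pdx s g p = a p * (f2 es ev) + (fderiv ℝ W p ev) * (fderiv ℝ a p es) := by
    rw [pdx, hgderiv.fderiv]; simp [ContinuousLinearMap.apply]; rfl
  have h3 : pdv g p = a p * (f2 ev ev) + (fderiv ℝ W p ev) * (fderiv ℝ a p ev) := by
    rw [pdv, hgderiv.fderiv]; simp [ContinuousLinearMap.apply]; rfl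
  have h4 : pdx s a p = fderiv ℝ a p es := rfl
  have h5 : pdv a p = fderiv ℝ a p ev := rfl
  have hbp : b s p = -(fderiv ℝ W p es) / (fderiv ℝ W p ev) := hb s p
  have hsym : f2 es ev = f2 ev es := hsymm es ev
  have h6 : pdv W p = fderiv ℝ W p ev := rfl
  rw [h1, h2, h3, h4, h5, h6, hbp, hsym]
  field_simp
  ring

/-- reformulation of Theorem 7.2. With `b_k = −(∂W/∂x^k)/(∂W/∂v)`
built from a smooth `W` with `W_v = ∂W/∂v ≠ 0` on an open `U ⊆ ℝⁿ × ℝ`, a smooth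
function `a` solves equation (7.1) iff `g = a W_v` is a first integral of all the
vector fields `L_s = ∂/∂x^s + b_s ∂/∂v`. -/
theorem stmt7 {n : ℕ} (U : Set (EuclideanSpace ℝ (Fin n) × ℝ)) (hU : IsOpen U)
    (W : EuclideanSpace ℝ (Fin n) × ℝ → ℝ) (hW : ContDiffOn ℝ (⊤ : ℕ∞) W U)
    (hWv : ∀ p ∈ U, pdv W p ≠ 0)
    (b : Fin n → EuclideanSpace ℝ (Fin n) × ℝ → ℝ)
    (hb : ∀ k, ∀ p, b k p = -(pdx k W p) / pdv W p)
    (a : EuclideanSpace ℝ (Fin n) × ℝ → ℝ) (ha : ContDiffOn ℝ (⊤ : ℕ∞) a U)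
    (g : EuclideanSpace ℝ (Fin n) × ℝ → ℝ) (hg : ∀ p, g p = a p * pdv W p) :
    (∀ p ∈ U, ∀ s : Fin n, pdx s a p + b s p * pdv a p = a p * pdv (b s) p)
    ↔ (∀ p ∈ U, ∀ s : Fin n, pdx s g p + b s p * pdv g p = 0) := by
  constructor
  · intro h p hp s
    rw [stmt7_key U hU W hW hWv b hb a ha g hg p hp s, h p hp s]
    ring
  · intro h p hp s
    have hk := stmt7_key U hU W hW hWv b hb a ha g hg p hp s
    rw [h p hp s] at hk
    have := mul_eq_zero.mp hk.symm
    rcases this with h0 | h0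
    · exact absurd h0 (hWv p hp)
    · linarith
end

section
/- Let F be the force field associated to (W,h) on Ω ⊆ ℝⁿ, and let x : I → Ω be a twice continuously differentiable curve on an interval I with x'(t) ≠ 0 for all t ∈ I and x''(t) = F(x(t), x'(t)) for all t ∈ I. Then the function u(t) := W(x(t), |x'(t)|) satisfies the ordinary differential equation u'(t) = h(u(t)) for all t ∈ I. -/
/-- `W_v(x,r) = ∂W/∂v (x,r)`: derivative of `W` in the modulus-of-velocity variable. -/
noncomputable def Wv {n : ℕ} (W : EuclideanSpace ℝ (Fin n) → ℝ → ℝ)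
    (x : EuclideanSpace ℝ (Fin n)) (r : ℝ) : ℝ :=
  deriv (W x) r

/-- `∂W/∂xⁱ (x,r)`: spatial partial derivative of `W` at fixed modulus of velocity. -/
noncomputable def Wx {n : ℕ} (W : EuclideanSpace ℝ (Fin n) → ℝ → ℝ) (i : Fin n)
    (x : EuclideanSpace ℝ (Fin n)) (r : ℝ) : ℝ :=
  fderiv ℝ (fun y => W y r) x (EuclideanSpace.single i 1)

/-- The force field (9.6) associated to the data `(W, h)` (flat space form):
`F_k(x,v) = h(W(x,|v|))/W_v(x,|v|) · N_k − |v| Σᵢ (∂W/∂xⁱ)(x,|v|)/W_v(x,|v|) · (2NⁱN_k − δⁱ_k)`,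
where `N = v/|v|`. -/
noncomputable def forceField {n : ℕ} (W : EuclideanSpace ℝ (Fin n) → ℝ → ℝ) (h : ℝ → ℝ)
    (x v : EuclideanSpace ℝ (Fin n)) : EuclideanSpace ℝ (Fin n) :=
  (EuclideanSpace.equiv (Fin n) ℝ).symm fun k =>
    h (W x ‖v‖) / Wv W x ‖v‖ * (v k / ‖v‖)
      - ‖v‖ * ∑ i : Fin n, Wx W i x ‖v‖ / Wv W x ‖v‖
          * (2 * (v i / ‖v‖) * (v k / ‖v‖) - if i = k then 1 else 0)


private theorem keyAlg {n : ℕ} (r A : ℝ) (hr : r ≠ 0) (v C : Fin n → ℝ)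
    (hv : ∑ k, v k * v k = r^2) :
    ∑ k, v k * (A * (v k / r) - r * ∑ i, C i * (2*(v i/r)*(v k/r) - if i = k then 1 else 0))
      = A * r - r * ∑ i, C i * v i := by
  have h1 : ∀ k, v k * (A * (v k / r) - r * ∑ i, C i * (2*(v i/r)*(v k/r) - if i = k then 1 else 0))
      = A/r * (v k * v k) - ∑ i, (2*r⁻¹ * (C i * v i) * (v k * v k) - r * (C i * (if i = k then v k else 0))) := by
    intro k
    rw [mul_sub, Finset.mul_sum, Finset.mul_sum]
    congr 1
    · ring
    · refine Finset.sum_congr rfl fun i _ => ?_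
      by_cases hik : i = k <;> simp [hik] <;> field_simp <;> ring
  simp only [h1, Finset.sum_sub_distrib, ← Finset.mul_sum, hv]
  rw [Finset.sum_comm]
  simp only [Finset.sum_sub_distrib, ← Finset.mul_sum, hv]
  have h2 : ∑ i, ∑ i1, C i1 * (if i1 = i then v i else 0) = ∑ i, C i * v i := by
    rw [Finset.sum_comm]; simp
  have h3 : ∀ i : Fin n, 2*r⁻¹*(C i*v i)*r^2 = 2*r*(C i * v i) := by
    intro i; field_simp
  simp only [h3, ← Finset.mul_sum] at *
  rw [h2]
  field_simp; ring

private theorem sumSingle {n : ℕ} (v : EuclideanSpace ℝ (Fin n)) :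
    ∑ i, v i • EuclideanSpace.single i (1:ℝ) = v := by
  ext j
  have : (∑ i, v i • EuclideanSpace.single i (1:ℝ)) j
      = ∑ i, (v i • EuclideanSpace.single i (1:ℝ)) j :=
    by rw [WithLp.ofLp_sum, Finset.sum_apply]
  rw [this]
  simp [EuclideanSpace.single_apply]

/-- flat-space form of (10.24)–(10.25). Along any trajectory of
the Newtonian dynamical system with the force field associated to `(W, h)`, the
quantity `u(t) = W(x(t), |x'(t)|)` obeys the ODE `u' = h(u)`. -/
theorem stmt11 {n : ℕ} (Ω : Set (EuclideanSpace ℝ (Fin n))) (hΩ : IsOpen Ω)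
    (W : EuclideanSpace ℝ (Fin n) → ℝ → ℝ)
    (hW : ContDiffOn ℝ (⊤ : ℕ∞) (fun p : EuclideanSpace ℝ (Fin n) × ℝ => W p.1 p.2)
      (Ω ×ˢ Set.Ioi (0 : ℝ)))
    (hWv : ∀ y ∈ Ω, ∀ r : ℝ, 0 < r → Wv W y r ≠ 0)
    (h : ℝ → ℝ) (hh : ContDiff ℝ (⊤ : ℕ∞) h)
    (I : Set ℝ) (x x' : ℝ → EuclideanSpace ℝ (Fin n))
    (hmem : ∀ t ∈ I, x t ∈ Ω)
    (hx' : ∀ t ∈ I, HasDerivAt x (x' t) t)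
    (hne : ∀ t ∈ I, x' t ≠ 0)
    (hx'' : ∀ t ∈ I, HasDerivAt x' (forceField W h (x t) (x' t)) t) :
    ∀ t ∈ I, HasDerivAt (fun s => W (x s) ‖x' s‖) (h (W (x t) ‖x' t‖)) t := by
  intro t ht
  classical
  have hxd := hx' t ht
  have hFd := hx'' t ht
  set v : EuclideanSpace ℝ (Fin n) := x' t with hvdef
  set F : EuclideanSpace ℝ (Fin n) := forceField W h (x t) v with hFdef
  have hv0 : v ≠ 0 := hne t ht
  have hr : (0:ℝ) < ‖v‖ := norm_pos_iff.mpr hv0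
  set r : ℝ := ‖v‖ with hrdef
  have hrne : r ≠ 0 := hr.ne'
  -- inner product derivative
  have hinner : HasDerivAt (fun s => (inner ℝ (x' s) (x' s) : ℝ))
      (inner ℝ v F + inner ℝ F v) t := hFd.inner ℝ hFd
  have hsq : (inner ℝ v v : ℝ) = r^2 := real_inner_self_eq_norm_sq v
  have hsqrt : HasDerivAt Real.sqrt (1 / (2 * Real.sqrt (inner ℝ v v : ℝ))) (inner ℝ v v : ℝ) :=
    Real.hasDerivAt_sqrt (by rw [hsq]; positivity)
  have hnormfun : (fun s => ‖x' s‖) = fun s => Real.sqrt (inner ℝ (x' s) (x' s) : ℝ) := by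
    funext s
    rw [real_inner_self_eq_norm_sq, Real.sqrt_sq (norm_nonneg _)]
  have hnorm : HasDerivAt (fun s => ‖x' s‖) ((inner ℝ v F : ℝ) / r) t := by
    have hcomp : HasDerivAt (fun s => Real.sqrt ((inner ℝ (x' s) (x' s)) : ℝ))
        (1 / (2 * Real.sqrt ((inner ℝ v v) : ℝ)) * ((inner ℝ v F : ℝ) + inner ℝ F v)) t :=
      hsqrt.comp t hinner
    rw [hnormfun]
    convert hcomp using 1
    rw [hsq, Real.sqrt_sq hr.le, real_inner_comm F v]
    field_simp
    ring
  -- differentiability of W at the point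
  have hopen : IsOpen (Ω ×ˢ Set.Ioi (0:ℝ)) := hΩ.prod isOpen_Ioi
  have hmemp : ((x t, r) : EuclideanSpace ℝ (Fin n) × ℝ) ∈ Ω ×ˢ Set.Ioi (0:ℝ) :=
    ⟨hmem t ht, hr⟩
  have hWat : ContDiffAt ℝ (⊤ : ℕ∞) (fun p : EuclideanSpace ℝ (Fin n) × ℝ => W p.1 p.2) (x t, r) :=
    hW.contDiffAt (hopen.mem_nhds hmemp)
  have hWdiff : DifferentiableAt ℝ (fun p : EuclideanSpace ℝ (Fin n) × ℝ => W p.1 p.2)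
      (x t, r) := hWat.differentiableAt (by simp)
  set L := fderiv ℝ (fun p : EuclideanSpace ℝ (Fin n) × ℝ => W p.1 p.2) (x t, r) with hLdef
  have hL : HasFDerivAt (fun p : EuclideanSpace ℝ (Fin n) × ℝ => W p.1 p.2) L (x t, r) :=
    hWdiff.hasFDerivAt
  -- derivative of the composite
  have hpair : HasDerivAt (fun s => ((x s, ‖x' s‖) : EuclideanSpace ℝ (Fin n) × ℝ))
      (v, (inner ℝ v F : ℝ) / r) t := hxd.prodMk hnorm
  have hcomp : HasDerivAt (fun s => W (x s) ‖x' s‖) (L (v, (inner ℝ v F : ℝ) / r)) t :=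
    (hL.comp_hasDerivAt t hpair :)
  -- identify L (0,1) with Wv
  have hWvL : Wv W (x t) r = L (0, 1) := by
    have hcurve : HasDerivAt (fun s : ℝ => ((x t, s) : EuclideanSpace ℝ (Fin n) × ℝ))
        ((0 : EuclideanSpace ℝ (Fin n)), (1:ℝ)) r :=
      (hasDerivAt_const r (x t)).prodMk (hasDerivAt_id r)
    have := hL.comp_hasDerivAt r hcurve
    exact this.deriv
  -- identify L (single i 1, 0) with Wx i
  have hWxL : ∀ i : Fin n, Wx W i (x t) r = L (EuclideanSpace.single i 1, 0) := by
    intro i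
    have hymap : HasFDerivAt (fun y : EuclideanSpace ℝ (Fin n) => ((y, r) : _ × ℝ))
        ((ContinuousLinearMap.id ℝ (EuclideanSpace ℝ (Fin n))).prod 0) (x t) :=
      (hasFDerivAt_id (x t)).prodMk (hasFDerivAt_const r (x t))
    have hcW : HasFDerivAt (fun y : EuclideanSpace ℝ (Fin n) => W y r)
        (L.comp ((ContinuousLinearMap.id ℝ (EuclideanSpace ℝ (Fin n))).prod 0)) (x t) :=
      (hL.comp (x t) hymap :)
    rw [Wx, hcW.fderiv]
    rfl
  -- expand L (v, b)
  have hLvb : ∀ b : ℝ, L (v, b) = (∑ i, v i * Wx W i (x t) r) + b * Wv W (x t) r := by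
    intro b
    have hsplit : ((v, b) : EuclideanSpace ℝ (Fin n) × ℝ)
        = (∑ i, v i • ((EuclideanSpace.single i 1 : EuclideanSpace ℝ (Fin n)), (0:ℝ)))
          + b • ((0 : EuclideanSpace ℝ (Fin n)), (1:ℝ)) := by
      refine Prod.ext ?_ ?_
      · simp [Prod.fst_sum, sumSingle]
      · simp [Prod.snd_sum]
    rw [hsplit, map_add, map_sum]
    simp only [map_smul, smul_eq_mul]
    rw [hWvL]
    congr 1
    exact Finset.sum_congr rfl fun i _ => by rw [hWxL i]
  -- inner product with the force field
  have hip : (inner ℝ v F : ℝ)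
      = (h (W (x t) r) / Wv W (x t) r) * r
        - r * ∑ i, (Wx W i (x t) r / Wv W (x t) r) * v i := by
    have hFk : ∀ k : Fin n, F k = h (W (x t) r) / Wv W (x t) r * (v k / r)
        - r * ∑ i : Fin n, Wx W i (x t) r / Wv W (x t) r
            * (2 * (v i / r) * (v k / r) - if i = k then 1 else 0) := fun k => rfl
    have hinnersum : (inner ℝ v F : ℝ) = ∑ k, v k * F k := by
      simp [PiLp.inner_apply]
      exact Finset.sum_congr rfl fun k _ => mul_comm _ _
    rw [hinnersum]
    have hsumsq : ∑ k, v k * v k = r^2 := by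
      rw [← real_inner_self_eq_norm_sq, PiLp.inner_apply]
      simp [sq]
    calc ∑ k, v k * F k
        = ∑ k, v k * (h (W (x t) r) / Wv W (x t) r * (v k / r)
            - r * ∑ i : Fin n, Wx W i (x t) r / Wv W (x t) r
              * (2 * (v i / r) * (v k / r) - if i = k then 1 else 0)) :=
          Finset.sum_congr rfl fun k _ => by rw [hFk k]
      _ = _ := keyAlg r _ hrne (fun i => v i) (fun i => Wx W i (x t) r / Wv W (x t) r) hsumsq
  -- final computation
  have hWvne : Wv W (x t) r ≠ 0 := hWv (x t) (hmem t ht) r hr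
  have hfinal : L (v, (inner ℝ v F : ℝ) / r) = h (W (x t) r) := by
    rw [hLvb, hip]
    have hdivsum : ∑ i, (Wx W i (x t) r / Wv W (x t) r) * v i
        = (∑ i, Wx W i (x t) r * v i) / Wv W (x t) r := by
      rw [Finset.sum_div]
      exact Finset.sum_congr rfl fun i _ => by ring
    have hcomm : ∑ i, v i * Wx W i (x t) r = ∑ i, Wx W i (x t) r * v i :=
      Finset.sum_congr rfl fun i _ => mul_comm _ _
    rw [hdivsum, hcomm]
    field_simp
    ring
  rw [← hfinal]
  exact hcomp
end

section
/- Let n ≥ 3 and let F be the force field associated to (W,h) on an open set Ω ⊆ ℝⁿ. Let U ⊆ ℝⁿ⁻¹ be open and connected, let I ⊆ ℝ be an open interval containing 0, let p₀ ∈ Ω, ν₀ > 0, and let n̂ : U → ℝⁿ be a smooth map with |n̂(u)| = 1 for all u. Let x : U × I → Ω be a smooth map such that: ∂²x/∂t²(u,t) = F(x(u,t), ∂x/∂t(u,t)) for all (u,t); ∂x/∂t(u,t) ≠ 0 for all (u,t); the vectors ∂x/∂u¹(u,t),…,∂x/∂uⁿ⁻¹(u,t) are linearly independent whenever t ≠ 0;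 and the initial conditions x(u,0) = p₀ and ∂x/∂t(u,0) = ν₀·n̂(u) hold for all u ∈ U. Then ⟨∂x/∂u^k(u,t), ∂x/∂t(u,t)⟩ = 0 for all (u,t) ∈ U × I and all k = 1,…,n−1, i.e. the hypersurfaces swept out at each fixed time t by the blown-up point are orthogonal to the trajectories. -/
open Set
open scoped RealInnerProductSpace

section gron

/-- Gronwall: solution of scalar linear ODE vanishing at left endpoint. -/
lemma gronwall_zero_right {f A : ℝ → ℝ} {b : ℝ} (hb : 0 ≤ b)
    (hA : ContinuousOn A (Icc 0 b))
    (hf : ∀ t ∈ Icc 0 b, HasDerivAt f (A t * f t) t) (h0 : f 0 = 0) : f b = 0 := by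
  obtain ⟨C, hC⟩ := (isCompact_Icc (a := (0:ℝ)) (b := b)).exists_bound_of_continuousOn hA
  set K := max C 0 with hK
  have key := norm_le_gronwallBound_of_norm_deriv_right_le (f := f)
    (f' := fun t => A t * f t) (δ := 0) (K := K) (ε := 0) (a := 0) (b := b)
    (fun t ht => (hf t ht).continuousAt.continuousWithinAt)
    (fun t ht => (hf t (Ico_subset_Icc_self ht)).hasDerivWithinAt)
    (by simp [h0])
    (fun t ht => by
      have h1 : ‖A t * f t‖ = ‖A t‖ * ‖f t‖ := norm_mul _ _
      have h2 : ‖A t‖ ≤ K := le_trans (hC t (Ico_subset_Icc_self ht)) (le_max_left _ _)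
      rw [h1, add_zero]
      exact mul_le_mul_of_nonneg_right h2 (norm_nonneg _))
  have h3 := key b ⟨hb, le_refl b⟩
  rw [sub_zero, gronwallBound_ε0, zero_mul] at h3
  exact norm_eq_zero.mp (le_antisymm h3 (norm_nonneg _))

/-- Linear scalar ODE with zero initial condition on an ordConnected set containing 0. -/
lemma linear_ODE_zero {J : Set ℝ} (hJc : J.OrdConnected) (h0J : (0:ℝ) ∈ J)
    {f A : ℝ → ℝ} (hA : ContinuousOn A J)
    (hf : ∀ t ∈ J, HasDerivAt f (A t * f t) t) (hf0 : f 0 = 0) :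
    ∀ t ∈ J, f t = 0 := by
  intro t ht
  rcases le_or_gt 0 t with h | h
  · have hsub : Icc 0 t ⊆ J := hJc.out h0J ht
    exact gronwall_zero_right h (hA.mono hsub) (fun s hs => hf s (hsub hs)) hf0
  · have hsub : Icc t 0 ⊆ J := hJc.out ht h0J
    have hmt : ∀ s ∈ Icc 0 (-t), -s ∈ J := by
      intro s hs
      exact hsub ⟨by linarith [hs.2], by linarith [hs.1]⟩
    have key : (f ∘ Neg.neg) (-t) = 0 := by
      apply gronwall_zero_right (f := f ∘ Neg.neg) (A := fun s => -A (-s)) (by linarith)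
      · exact ((hA.mono hsub).comp continuousOn_neg (fun s hs => mem_Icc.mpr ⟨by linarith [(mem_Icc.mp hs).2], by linarith [(mem_Icc.mp hs).1]⟩)).neg
      · intro s hs
        have h1 : HasDerivAt (f ∘ Neg.neg) ((A (-s) * f (-s)) * (-1)) s :=
          (hf (-s) (hmt s hs)).comp s (hasDerivAt_neg s)
        convert h1 using 1
        simp only [Function.comp_apply]
        ring
      · simpa [Function.comp] using hf0
    simpa [Function.comp] using key

end gron

section helpers

variable {G : Type*} [NormedAddCommGroup G] [NormedSpace ℝ G]
variable {F : Type*} [NormedAddCommGroup F] [NormedSpace ℝ F]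

lemma hasDerivAt_partial_snd {ψ : G × ℝ → F} {p : G × ℝ}
    (hψ : HasFDerivAt ψ (fderiv ℝ ψ p) p) :
    HasDerivAt (fun s => ψ (p.1, s)) (fderiv ℝ ψ p (0, 1)) p.2 := by
  have hc : HasDerivAt (fun s : ℝ => (p.1, s)) ((0 : G), (1 : ℝ)) p.2 :=
    (hasDerivAt_const p.2 p.1).prodMk (hasDerivAt_id p.2)
  exact hψ.comp_hasDerivAt p.2 hc

lemma hasFDerivAt_partial_fst {ψ : G × ℝ → F} {p : G × ℝ}
    (hψ : HasFDerivAt ψ (fderiv ℝ ψ p) p) :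
    HasFDerivAt (fun y => ψ (y, p.2))
      ((fderiv ℝ ψ p).comp (ContinuousLinearMap.inl ℝ G ℝ)) p.1 :=
  hψ.comp p.1 (hasFDerivAt_prodMk_left p.1 p.2)

lemma clm_prod_split (L : (G × ℝ) →L[ℝ] F) (ξ : G) (τ : ℝ) :
    L (ξ, τ) = L (ξ, 0) + τ • L (0, 1) := by
  have : (ξ, τ) = (ξ, (0:ℝ)) + τ • ((0:G), (1:ℝ)) := by
    simp [Prod.ext_iff]
  rw [this, map_add, map_smul]

lemma hasFDerivAt_fderiv_apply_s13 {φ : G → F} {p : G}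
    (hφ : ContDiffAt ℝ 2 φ p) (a : G) :
    HasFDerivAt (fun q => fderiv ℝ φ q a)
      ((fderiv ℝ (fderiv ℝ φ) p).flip a) p := by
  have h1 : ContDiffAt ℝ 1 (fderiv ℝ φ) p := hφ.fderiv_right (by norm_num)
  have h2 : HasFDerivAt (fderiv ℝ φ) (fderiv ℝ (fderiv ℝ φ) p) p :=
    (h1.differentiableAt one_ne_zero).hasFDerivAt
  have h3 := h2.clm_apply (hasFDerivAt_const a p)
  simpa using h3

lemma fderiv_fderiv_symm {φ : G → F} {p : G}
    (hφ : ContDiffAt ℝ 2 φ p) (a b : G) :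
    fderiv ℝ (fun q => fderiv ℝ φ q a) p b = fderiv ℝ (fun q => fderiv ℝ φ q b) p a := by
  have ha := (hasFDerivAt_fderiv_apply_s13 hφ a).fderiv
  have hb := (hasFDerivAt_fderiv_apply_s13 hφ b).fderiv
  rw [ha, hb]
  simp only [ContinuousLinearMap.flip_apply]
  exact hφ.isSymmSndFDerivAt (by simp) b a

lemma hasFDerivAt_norm_comp {E : Type*} [NormedAddCommGroup E] [InnerProductSpace ℝ E]
    {f : G → E} {f' : G →L[ℝ] E} {x : G} (hf : HasFDerivAt f f' x) (h0 : f x ≠ 0) :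
    HasFDerivAt (fun y => ‖f y‖) ((‖f x‖⁻¹) • ((innerSL ℝ (f x)).comp f')) x := by
  have hsq : HasFDerivAt (fun y => ‖f y‖ ^ 2) (2 • (innerSL ℝ (f x)).comp f') x := hf.norm_sq
  have hne : ‖f x‖ ^ 2 ≠ 0 := pow_ne_zero 2 (norm_ne_zero_iff.mpr h0)
  have hs : HasDerivAt Real.sqrt (1 / (2 * Real.sqrt (‖f x‖ ^ 2))) (‖f x‖ ^ 2) :=
    Real.hasDerivAt_sqrt hne
  have hcomp := hs.comp_hasFDerivAt x hsq
  have heq : (Real.sqrt ∘ fun y => ‖f y‖ ^ 2) = fun y => ‖f y‖ := by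
    funext y; simp [Real.sqrt_sq (norm_nonneg _)]
  rw [heq] at hcomp
  refine hcomp.congr_fderiv ?_
  rw [Real.sqrt_sq (norm_nonneg _)]
  ext ξ
  simp only [ContinuousLinearMap.smul_apply, ContinuousLinearMap.coe_smul',
    Pi.smul_apply, smul_eq_mul]
  ring

end helpers

lemma clm_euclidean_sum {n : ℕ} (T : EuclideanSpace ℝ (Fin n) →L[ℝ] ℝ)
    (y : EuclideanSpace ℝ (Fin n)) :
    T y = ∑ i : Fin n, y i * T (EuclideanSpace.single i 1) := by
  have hy : y = ∑ i : Fin n, (y i) • EuclideanSpace.single i (1:ℝ) := by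
    ext j
    have hs : (∑ i : Fin n, (y i) • EuclideanSpace.single i (1:ℝ)) j
        = ∑ i : Fin n, ((y i) • EuclideanSpace.single i (1:ℝ)) j :=
      by rw [WithLp.ofLp_sum]; exact Finset.sum_apply j Finset.univ _
    rw [hs]
    simp [EuclideanSpace.single_apply, Finset.sum_ite_eq']
  conv_lhs => rw [hy]
  rw [map_sum]
  simp [smul_eq_mul]

lemma inner_forceField {n : ℕ} (W : EuclideanSpace ℝ (Fin n) → ℝ → ℝ) (h : ℝ → ℝ)
    (a v y : EuclideanSpace ℝ (Fin n)) (hv : v ≠ 0) (hc : Wv W a ‖v‖ ≠ 0) :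
    ⟪y, forceField W h a v⟫ =
      (h (W a ‖v‖) - 2 * fderiv ℝ (fun z => W z ‖v‖) a v) / (Wv W a ‖v‖ * ‖v‖) * ⟪y, v⟫
      + (‖v‖ / Wv W a ‖v‖) * fderiv ℝ (fun z => W z ‖v‖) a y := by
  have hr0 : ‖v‖ ≠ 0 := norm_ne_zero_iff.mpr hv
  set r := ‖v‖ with hrdef
  set T := fderiv ℝ (fun z => W z r) a with hTdef
  set c := Wv W a r with hcdef
  set H := h (W a r) with hHdef
  have hF : ∀ k, forceField W h a v k =
      H / c * (v k / r) - r * ∑ i : Fin n, T (EuclideanSpace.single i 1) / c *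
        (2 * (v i / r) * (v k / r) - if i = k then 1 else 0) := by
    intro k; rfl
  have hinner : ⟪y, forceField W h a v⟫ = ∑ k, y k * forceField W h a v k := by
    rw [PiLp.inner_apply]
    simp [RCLike.inner_apply, mul_comm]
  have hyv : ⟪y, v⟫ = ∑ k, y k * v k := by
    rw [PiLp.inner_apply]
    simp [RCLike.inner_apply, mul_comm]
  rw [hinner, hyv, clm_euclidean_sum T v, clm_euclidean_sum T y]
  set S := ∑ i : Fin n, v i * T (EuclideanSpace.single i 1) with hSdef
  have inner_eq : ∀ k, (∑ i : Fin n, T (EuclideanSpace.single i 1) / c *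
      (2 * (v i / r) * (v k / r) - if i = k then 1 else 0))
      = (2 * v k / (c * r * r)) * S - T (EuclideanSpace.single k 1) / c := by
    intro k
    simp only [mul_sub]
    rw [Finset.sum_sub_distrib]
    congr 1
    · rw [hSdef, Finset.mul_sum]
      refine Finset.sum_congr rfl fun i _ => ?_
      field_simp
    · simp [mul_ite, Finset.sum_ite_eq']
  calc ∑ k, y k * forceField W h a v k
      = ∑ k, ((H / (c * r)) * (y k * v k) - (2 / (c * r)) * S * (y k * v k)
          + (r / c) * (y k * T (EuclideanSpace.single k 1))) := by
        refine Finset.sum_congr rfl fun k _ => ?_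
        rw [hF k, inner_eq k]
        field_simp
        ring
    _ = (H / (c * r)) * (∑ k, y k * v k) - (2 / (c * r)) * S * (∑ k, y k * v k)
          + (r / c) * (∑ k, y k * T (EuclideanSpace.single k 1)) := by
        rw [Finset.sum_add_distrib, Finset.sum_sub_distrib, ← Finset.mul_sum,
          ← Finset.mul_sum, ← Finset.mul_sum]
    _ = (H - 2 * S) / (c * r) * (∑ k, y k * v k)
          + (r / c) * (∑ k, y k * T (EuclideanSpace.single k 1)) := by
        ring

set_option maxHeartbeats 1000000 in
/-- flat-space form of Theorem 12.1. For any point `p₀` and any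
constant `ν₀ > 0`, the fan of trajectories of the Newtonian dynamical system with the
force field associated to `(W, h)` issued from `p₀` with initial velocities `ν₀ n̂(u)`
(`n̂` running over unit vectors) realizes a normal blow-up of the point `p₀`: the
hypersurfaces swept out at each fixed time are orthogonal to the trajectories. -/
theorem stmt13 (n : ℕ) (hn : 3 ≤ n)
    (Ω : Set (EuclideanSpace ℝ (Fin n))) (hΩ : IsOpen Ω)
    (W : EuclideanSpace ℝ (Fin n) → ℝ → ℝ)
    (hW : ContDiffOn ℝ (⊤ : ℕ∞) (fun p : EuclideanSpace ℝ (Fin n) × ℝ => W p.1 p.2)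
      (Ω ×ˢ Set.Ioi (0 : ℝ)))
    (hWv : ∀ y ∈ Ω, ∀ r : ℝ, 0 < r → Wv W y r ≠ 0)
    (h : ℝ → ℝ) (hh : ContDiff ℝ (⊤ : ℕ∞) h)
    (U : Set (EuclideanSpace ℝ (Fin (n - 1)))) (hU : IsOpen U) (hUconn : IsConnected U)
    (I : Set ℝ) (hI : IsOpen I) (hIconn : I.OrdConnected) (h0I : (0 : ℝ) ∈ I)
    (p₀ : EuclideanSpace ℝ (Fin n)) (hp₀ : p₀ ∈ Ω)
    (ν₀ : ℝ) (hν₀ : 0 < ν₀)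
    (nhat : EuclideanSpace ℝ (Fin (n - 1)) → EuclideanSpace ℝ (Fin n))
    (hnhat : ContDiffOn ℝ (⊤ : ℕ∞) nhat U) (hnhat1 : ∀ u ∈ U, ‖nhat u‖ = 1)
    (x : EuclideanSpace ℝ (Fin (n - 1)) → ℝ → EuclideanSpace ℝ (Fin n))
    (hx : ContDiffOn ℝ (⊤ : ℕ∞) (fun p : EuclideanSpace ℝ (Fin (n - 1)) × ℝ => x p.1 p.2) (U ×ˢ I))
    (hmem : ∀ u ∈ U, ∀ t ∈ I, x u t ∈ Ω)
    (hode : ∀ u ∈ U, ∀ t ∈ I,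
      deriv (deriv (x u)) t = forceField W h (x u t) (deriv (x u) t))
    (hvne : ∀ u ∈ U, ∀ t ∈ I, deriv (x u) t ≠ 0)
    (hli : ∀ u ∈ U, ∀ t ∈ I, t ≠ 0 → LinearIndependent ℝ (fun k : Fin (n - 1) =>
      fderiv ℝ (fun u' => x u' t) u (EuclideanSpace.single k 1)))
    (hinit : ∀ u ∈ U, x u 0 = p₀)
    (hinit' : ∀ u ∈ U, deriv (x u) 0 = ν₀ • nhat u) :
    ∀ u ∈ U, ∀ t ∈ I, ∀ k : Fin (n - 1),
      ⟪fderiv ℝ (fun u' => x u' t) u (EuclideanSpace.single k 1), deriv (x u) t⟫ = 0 := by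
  classical
  -- notation
  set X : EuclideanSpace ℝ (Fin (n - 1)) × ℝ → EuclideanSpace ℝ (Fin n) :=
    fun p => x p.1 p.2 with hXdef
  have hO : IsOpen (U ×ˢ I) := hU.prod hI
  have hXC : ∀ p ∈ U ×ˢ I, ContDiffAt ℝ (⊤ : ℕ∞) X p := fun p hp => hx.contDiffAt (hO.mem_nhds hp)
  have hXd : ∀ p ∈ U ×ˢ I, HasFDerivAt X (fderiv ℝ X p) p := fun p hp =>
    ((hXC p hp).differentiableAt (by simp)).hasFDerivAt
  -- velocity as directional derivative of the joint map
  have hVeq : ∀ p ∈ U ×ˢ I, deriv (x p.1) p.2 = fderiv ℝ X p (0, 1) := by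
    intro p hp
    exact (hasDerivAt_partial_snd (hXd p hp)).deriv
  have hVC : ∀ p ∈ U ×ˢ I, ContDiffAt ℝ (⊤ : ℕ∞) (fun q => fderiv ℝ X q (0, 1)) p := fun p hp =>
    ((hXC p hp).fderiv_right (by simp)).clm_apply contDiffAt_const
  have hVd : ∀ p ∈ U ×ˢ I, HasFDerivAt (fun q => fderiv ℝ X q (0, 1))
      (fderiv ℝ (fun q => fderiv ℝ X q (0, 1)) p) p := fun p hp =>
    ((hVC p hp).differentiableAt (by simp)).hasFDerivAt
  have hVne : ∀ p ∈ U ×ˢ I, fderiv ℝ X p (0, 1) ≠ 0 := by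
    intro p hp
    rw [← hVeq p hp]
    exact hvne p.1 hp.1 p.2 hp.2
  have hrpos : ∀ p ∈ U ×ˢ I, (0:ℝ) < ‖fderiv ℝ X p (0, 1)‖ := fun p hp =>
    norm_pos_iff.mpr (hVne p hp)
  -- the acceleration
  have hacc : ∀ p ∈ U ×ˢ I, fderiv ℝ (fun q => fderiv ℝ X q (0, 1)) p (0, 1)
      = forceField W h (X p) (fderiv ℝ X p (0, 1)) := by
    intro p hp
    have h1 : HasDerivAt (fun s => fderiv ℝ X (p.1, s) (0, 1))
        (fderiv ℝ (fun q => fderiv ℝ X q (0, 1)) p (0, 1)) p.2 :=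
      hasDerivAt_partial_snd (hVd p hp)
    have hev : (deriv (x p.1)) =ᶠ[nhds p.2] fun s => fderiv ℝ X (p.1, s) (0, 1) := by
      have hc : ContinuousAt (fun s : ℝ => ((p.1, s) : EuclideanSpace ℝ (Fin (n-1)) × ℝ)) p.2 :=
        (Continuous.prodMk_right p.1).continuousAt
      filter_upwards [hc.preimage_mem_nhds (hO.mem_nhds hp)] with s hs using hVeq (p.1, s) hs
    have h2 : deriv (deriv (x p.1)) p.2 = fderiv ℝ (fun q => fderiv ℝ X q (0, 1)) p (0, 1) := by
      rw [Filter.EventuallyEq.deriv_eq hev]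
      exact h1.deriv
    rw [← h2, hode p.1 hp.1 p.2 hp.2, hVeq p hp]
  -- the potential side
  set WJ : EuclideanSpace ℝ (Fin n) × ℝ → ℝ := fun q => W q.1 q.2 with hWJdef
  have hΩI : IsOpen (Ω ×ˢ Ioi (0:ℝ)) := hΩ.prod isOpen_Ioi
  have hWJC : ∀ q ∈ Ω ×ˢ Ioi (0:ℝ), ContDiffAt ℝ (⊤ : ℕ∞) WJ q := fun q hq => hW.contDiffAt (hΩI.mem_nhds hq)
  have hWJd : ∀ q ∈ Ω ×ˢ Ioi (0:ℝ), HasFDerivAt WJ (fderiv ℝ WJ q) q := fun q hq =>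
    ((hWJC q hq).differentiableAt (by simp)).hasFDerivAt
  have hWveq : ∀ q ∈ Ω ×ˢ Ioi (0:ℝ), Wv W q.1 q.2 = fderiv ℝ WJ q (0, 1) := by
    intro q hq
    exact (hasDerivAt_partial_snd (hWJd q hq)).deriv
  have hWxeq : ∀ q ∈ Ω ×ˢ Ioi (0:ℝ), ∀ ξ : EuclideanSpace ℝ (Fin n), fderiv ℝ (fun z => W z q.2) q.1 ξ = fderiv ℝ WJ q (ξ, 0) := by
    intro q hq ξ
    have := (hasFDerivAt_partial_fst (hWJd q hq)).fderiv
    calc fderiv ℝ (fun z => W z q.2) q.1 ξ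
        = ((fderiv ℝ WJ q).comp (ContinuousLinearMap.inl ℝ (EuclideanSpace ℝ (Fin n)) ℝ)) ξ := by rw [← this]
      _ = fderiv ℝ WJ q (ξ, 0) := rfl
  have hWsplit : ∀ q ∈ Ω ×ˢ Ioi (0:ℝ), ∀ ξ : EuclideanSpace ℝ (Fin n), ∀ τ : ℝ, fderiv ℝ WJ q (ξ, τ)
      = fderiv ℝ (fun z => W z q.2) q.1 ξ + τ * Wv W q.1 q.2 := by
    intro q hq ξ τ
    rw [clm_prod_split, hWxeq q hq, hWveq q hq, smul_eq_mul]
  -- membership of the lifted curve data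
  have hGmem : ∀ p ∈ U ×ˢ I, (X p, ‖fderiv ℝ X p (0, 1)‖) ∈ Ω ×ˢ Ioi (0:ℝ) := fun p hp =>
    ⟨hmem p.1 hp.1 p.2 hp.2, hrpos p hp⟩
  -- function w and its derivative
  set w : EuclideanSpace ℝ (Fin (n - 1)) × ℝ → ℝ := fun p => WJ (X p, ‖fderiv ℝ X p (0, 1)‖) with hwdef
  have hwd : ∀ p ∈ U ×ˢ I, HasFDerivAt w
      ((fderiv ℝ WJ (X p, ‖fderiv ℝ X p (0, 1)‖)).comp
        ((fderiv ℝ X p).prod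
          ((‖fderiv ℝ X p (0, 1)‖⁻¹) • ((innerSL ℝ (fderiv ℝ X p (0, 1))).comp
            (fderiv ℝ (fun q => fderiv ℝ X q (0, 1)) p))))) p := by
    intro p hp
    exact (hWJd _ (hGmem p hp)).comp p
      ((hXd p hp).prodMk (hasFDerivAt_norm_comp (hVd p hp) (hVne p hp)))
  have hwC : ∀ p ∈ U ×ˢ I, ContDiffAt ℝ (⊤ : ℕ∞) w p := by
    intro p hp
    exact (hWJC _ (hGmem p hp)).comp p
      ((hXC p hp).prodMk (((hVC p hp).norm ℝ (hVne p hp))))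
  -- directional derivative of w
  have hDw : ∀ p ∈ U ×ˢ I, ∀ ξ : EuclideanSpace ℝ (Fin (n - 1)) × ℝ, fderiv ℝ w p ξ
      = fderiv ℝ (fun z => W z ‖fderiv ℝ X p (0, 1)‖) (X p) (fderiv ℝ X p ξ)
        + (⟪fderiv ℝ X p (0, 1), fderiv ℝ (fun q => fderiv ℝ X q (0, 1)) p ξ⟫
            / ‖fderiv ℝ X p (0, 1)‖) * Wv W (X p) ‖fderiv ℝ X p (0, 1)‖ := by
    intro p hp ξ
    rw [(hwd p hp).fderiv, ContinuousLinearMap.comp_apply, ContinuousLinearMap.prod_apply,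
      hWsplit _ (hGmem p hp)]
    simp only [ContinuousLinearMap.smul_apply, ContinuousLinearMap.comp_apply,
      innerSL_apply_apply, smul_eq_mul]
    rw [div_eq_inv_mul]
  -- the fundamental ODE w_t = h(w)
  have hC1 : ∀ p ∈ U ×ˢ I, fderiv ℝ w p (0, 1) = h (w p) := by
    intro p hp
    have hWv' : Wv W (X p) ‖fderiv ℝ X p (0, 1)‖ ≠ 0 :=
      hWv _ (hmem p.1 hp.1 p.2 hp.2) _ (hrpos p hp)
    have hr' : ‖fderiv ℝ X p (0, 1)‖ ≠ 0 := ne_of_gt (hrpos p hp)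
    rw [hDw p hp (0, 1), hacc p hp,
      inner_forceField W h (X p) (fderiv ℝ X p (0, 1)) (fderiv ℝ X p (0, 1)) (hVne p hp) hWv',
      real_inner_self_eq_norm_sq]
    have hwp : w p = W (X p) ‖fderiv ℝ X p (0, 1)‖ := rfl
    rw [hwp]
    field_simp
    ring
  -- Now fix u and k
  intro u hu
  suffices hsuff : ∀ k : Fin (n-1), ∀ t ∈ I,
      ⟪fderiv ℝ (fun u' => x u' t) u (EuclideanSpace.single k 1), deriv (x u) t⟫ = 0 by
    intro t ht k; exact hsuff k t ht
  intro k
  set e : EuclideanSpace ℝ (Fin (n - 1)) := EuclideanSpace.single k 1 with hedef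
  have hmemO : ∀ t ∈ I, ((u, t) : EuclideanSpace ℝ (Fin (n-1)) × ℝ) ∈ U ×ˢ I := fun t ht => ⟨hu, ht⟩
  -- the function z
  set z : ℝ → ℝ := fun s => fderiv ℝ w (u, s) (e, 0) with hzdef
  have hzode : ∀ t ∈ I, HasDerivAt z (deriv h (w (u, t)) * z t) t := by
    intro t ht
    have hp : ((u, t) : EuclideanSpace ℝ (Fin (n-1)) × ℝ) ∈ U ×ˢ I := hmemO t ht
    have hw2 : ContDiffAt ℝ 2 w (u, t) := (hwC _ hp).of_le (WithTop.coe_le_coe.mpr le_top)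
    have hwfd : HasFDerivAt w (fderiv ℝ w (u, t)) (u, t) :=
      ((hwC _ hp).differentiableAt (by simp)).hasFDerivAt
    have h1 : HasFDerivAt (fun q => fderiv ℝ w q (e, 0))
        ((fderiv ℝ (fderiv ℝ w) (u, t)).flip ((e, 0))) (u, t) :=
      hasFDerivAt_fderiv_apply_s13 hw2 (e, 0)
    have h2 : HasDerivAt z ((fderiv ℝ (fderiv ℝ w) (u, t)).flip (e, 0) (0, 1)) t :=
      h1.comp_hasDerivAt t ((hasDerivAt_const t u).prodMk (hasDerivAt_id t))
    have hev : (fun q => fderiv ℝ w q ((0 : EuclideanSpace ℝ (Fin (n-1))), (1:ℝ)))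
        =ᶠ[nhds ((u, t) : EuclideanSpace ℝ (Fin (n-1)) × ℝ)] (fun q => h (w q)) := by
      filter_upwards [hO.mem_nhds hp] with q hq using hC1 q hq
    have e3 : fderiv ℝ (fun q => fderiv ℝ w q ((0 : EuclideanSpace ℝ (Fin (n-1))), (1:ℝ))) (u, t)
        = fderiv ℝ (fun q => h (w q)) (u, t) := hev.fderiv_eq
    have e4 : fderiv ℝ (fun q => h (w q)) (u, t) (e, 0)
        = deriv h (w (u, t)) * fderiv ℝ w (u, t) (e, 0) := by
      have h5 := (((hh.differentiable (by simp)) (w (u, t))).hasDerivAt.comp_hasFDerivAt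
        (u, t) hwfd).fderiv
      rw [show (fun q => h (w q)) = h ∘ w from rfl, h5]
      simp
    have hval : (fderiv ℝ (fderiv ℝ w) (u, t)).flip (e, 0) (0, 1)
        = deriv h (w (u, t)) * z t := by
      calc (fderiv ℝ (fderiv ℝ w) (u, t)).flip (e, 0) (0, 1)
          = fderiv ℝ (fun q => fderiv ℝ w q (e, 0)) (u, t) (0, 1) := by rw [h1.fderiv]
        _ = fderiv ℝ (fun q => fderiv ℝ w q (0, 1)) (u, t) (e, 0) :=
            fderiv_fderiv_symm hw2 _ _
        _ = fderiv ℝ (fun q => h (w q)) (u, t) (e, 0) := by rw [e3]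
        _ = deriv h (w (u, t)) * z t := e4
    exact hval ▸ h2
  have hzcont : ContinuousOn (fun t => deriv h (w (u, t))) I := by
    intro t ht
    have hp : ((u, t) : EuclideanSpace ℝ (Fin (n-1)) × ℝ) ∈ U ×ˢ I := hmemO t ht
    have c1 : ContinuousAt (fun s : ℝ => ((u, s) : EuclideanSpace ℝ (Fin (n-1)) × ℝ)) t :=
      (Continuous.prodMk_right u).continuousAt
    have c2 : ContinuousAt w (u, t) := (hwC _ hp).continuousAt
    have c3 : ContinuousAt (deriv h) (w (u, t)) := (hh.continuous_deriv (by simp)).continuousAt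
    have c12 : ContinuousAt (w ∘ Prod.mk u) t := c2.comp c1
    have c4 : ContinuousAt ((deriv h) ∘ (w ∘ (Prod.mk u))) t :=
      ContinuousAt.comp (by exact c3) c12
    exact c4.continuousWithinAt
  have hz0 : z 0 = 0 := by
    have hp0 : ((u, 0) : EuclideanSpace ℝ (Fin (n-1)) × ℝ) ∈ U ×ˢ I := hmemO 0 h0I
    have hwfd : HasFDerivAt w (fderiv ℝ w (u, 0)) (u, 0) :=
      ((hwC _ hp0).differentiableAt (by simp)).hasFDerivAt
    have hev : (fun u' => w (u', (0:ℝ))) =ᶠ[nhds u] (fun _ => W p₀ ν₀) := by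
      filter_upwards [hU.mem_nhds hu] with u' hu'
      have hp' : ((u', 0) : EuclideanSpace ℝ (Fin (n-1)) × ℝ) ∈ U ×ˢ I := ⟨hu', h0I⟩
      have hX0 : X (u', 0) = p₀ := hinit u' hu'
      have hV0 : fderiv ℝ X (u', 0) (0, 1) = ν₀ • nhat u' := by
        rw [← hVeq _ hp']
        exact hinit' u' hu'
      show w (u', 0) = W p₀ ν₀
      have hw' : w (u', 0) = W (X (u', 0)) ‖fderiv ℝ X (u', 0) (0, 1)‖ := rfl
      rw [hw', hX0, hV0, norm_smul]
      simp [hnhat1 u' hu', abs_of_pos hν₀]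
    have h3 := (hasFDerivAt_partial_fst hwfd).fderiv
    calc z 0 = ((fderiv ℝ w (u, 0)).comp
          (ContinuousLinearMap.inl ℝ (EuclideanSpace ℝ (Fin (n-1))) ℝ)) e := rfl
      _ = fderiv ℝ (fun u' => w (u', (0:ℝ))) u e := by rw [← h3]
      _ = 0 := by rw [hev.fderiv_eq]; simp
  have hzzero : ∀ t ∈ I, z t = 0 := linear_ODE_zero hIconn h0I hzcont hzode hz0
  -- key consequence
  have hK : ∀ t ∈ I, fderiv ℝ (fun zz => W zz ‖fderiv ℝ X (u, t) (0, 1)‖) (X (u, t))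
      (fderiv ℝ X (u, t) (e, 0))
      = -((⟪fderiv ℝ X (u, t) (0, 1), fderiv ℝ (fun q => fderiv ℝ X q (0, 1)) (u, t) (e, 0)⟫
          / ‖fderiv ℝ X (u, t) (0, 1)‖) * Wv W (X (u, t)) ‖fderiv ℝ X (u, t) (0, 1)‖) := by
    intro t ht
    have h1 := hDw (u, t) (hmemO t ht) (e, 0)
    have h2 := hzzero t ht
    rw [hzdef] at h2
    simp only at h2
    rw [h2] at h1
    linarith [h1]
  -- the function g
  set g : ℝ → ℝ := fun s => ⟪fderiv ℝ X (u, s) (e, 0), fderiv ℝ X (u, s) (0, 1)⟫ with hgdef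
  have hgode : ∀ t ∈ I, HasDerivAt g
      ((h (w (u, t)) - 2 * fderiv ℝ (fun zz => W zz ‖fderiv ℝ X (u, t) (0, 1)‖) (X (u, t))
          (fderiv ℝ X (u, t) (0, 1)))
        / (Wv W (X (u, t)) ‖fderiv ℝ X (u, t) (0, 1)‖ * ‖fderiv ℝ X (u, t) (0, 1)‖) * g t) t := by
    intro t ht
    have hp : ((u, t) : EuclideanSpace ℝ (Fin (n-1)) × ℝ) ∈ U ×ˢ I := hmemO t ht
    have hX2 : ContDiffAt ℝ 2 X (u, t) := (hXC _ hp).of_le (WithTop.coe_le_coe.mpr le_top)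
    have hWv' : Wv W (X (u, t)) ‖fderiv ℝ X (u, t) (0, 1)‖ ≠ 0 :=
      hWv _ (hmem u hu t ht) _ (hrpos _ hp)
    have hr' : ‖fderiv ℝ X (u, t) (0, 1)‖ ≠ 0 := ne_of_gt (hrpos _ hp)
    have hY' : HasDerivAt (fun s => fderiv ℝ X (u, s) (e, 0))
        ((fderiv ℝ (fderiv ℝ X) (u, t)).flip (e, 0) (0, 1)) t :=
      (hasFDerivAt_fderiv_apply_s13 hX2 (e, 0)).comp_hasDerivAt t
        ((hasDerivAt_const t u).prodMk (hasDerivAt_id t))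
    have hV' : HasDerivAt (fun s => fderiv ℝ X (u, s) (0, 1))
        ((fderiv ℝ (fderiv ℝ X) (u, t)).flip (0, 1) (0, 1)) t :=
      (hasFDerivAt_fderiv_apply_s13 hX2 (0, 1)).comp_hasDerivAt t
        ((hasDerivAt_const t u).prodMk (hasDerivAt_id t))
    have ea : (fderiv ℝ (fderiv ℝ X) (u, t)).flip (0, 1) (0, 1)
        = forceField W h (X (u, t)) (fderiv ℝ X (u, t) (0, 1)) := by
      have hf := (hasFDerivAt_fderiv_apply_s13 hX2
        (((0 : EuclideanSpace ℝ (Fin (n-1))), (1:ℝ)))).fderiv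
      rw [← hf]
      exact hacc _ hp
    have eb : (fderiv ℝ (fderiv ℝ X) (u, t)).flip (e, 0) (0, 1)
        = fderiv ℝ (fun q => fderiv ℝ X q (0, 1)) (u, t) (e, 0) := by
      have hf := (hasFDerivAt_fderiv_apply_s13 hX2 ((e, (0:ℝ)))).fderiv
      rw [← hf]
      exact fderiv_fderiv_symm hX2 _ _
    have hd : HasDerivAt g
        (⟪fderiv ℝ X (u, t) (e, 0), (fderiv ℝ (fderiv ℝ X) (u, t)).flip (0, 1) (0, 1)⟫
          + ⟪(fderiv ℝ (fderiv ℝ X) (u, t)).flip (e, 0) (0, 1), fderiv ℝ X (u, t) (0, 1)⟫) t := by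
      exact hY'.inner ℝ hV'
    rw [ea, eb] at hd
    have heq : ⟪fderiv ℝ X (u, t) (e, 0), forceField W h (X (u, t)) (fderiv ℝ X (u, t) (0, 1))⟫
        + ⟪fderiv ℝ (fun q => fderiv ℝ X q (0, 1)) (u, t) (e, 0), fderiv ℝ X (u, t) (0, 1)⟫
        = (h (w (u, t)) - 2 * fderiv ℝ (fun zz => W zz ‖fderiv ℝ X (u, t) (0, 1)‖) (X (u, t))
            (fderiv ℝ X (u, t) (0, 1)))
          / (Wv W (X (u, t)) ‖fderiv ℝ X (u, t) (0, 1)‖ * ‖fderiv ℝ X (u, t) (0, 1)‖) * g t := by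
      rw [inner_forceField W h (X (u, t)) (fderiv ℝ X (u, t) (0, 1)) (fderiv ℝ X (u, t) (e, 0))
          (hVne _ hp) hWv',
        real_inner_comm (fderiv ℝ X (u, t) (0, 1))
          (fderiv ℝ (fun q => fderiv ℝ X q (0, 1)) (u, t) (e, 0)), hK t ht]
      have hwp : w (u, t) = W (X (u, t)) ‖fderiv ℝ X (u, t) (0, 1)‖ := rfl
      have hgt : g t = ⟪fderiv ℝ X (u, t) (e, 0), fderiv ℝ X (u, t) (0, 1)⟫ := rfl
      rw [hwp, hgt]
      set r := ‖fderiv ℝ X (u, t) (0, 1)‖ with hrdef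
      set c := Wv W (X (u, t)) r with hcdef
      set TT := fderiv ℝ (fun zz => W zz r) (X (u, t)) (fderiv ℝ X (u, t) (0, 1)) with hTdef
      set qq : ℝ := ⟪fderiv ℝ X (u, t) (0, 1),
        fderiv ℝ (fun q => fderiv ℝ X q (0, 1)) (u, t) (e, 0)⟫ with hqdef
      set gg : ℝ := ⟪fderiv ℝ X (u, t) (e, 0), fderiv ℝ X (u, t) (0, 1)⟫ with hgdef2
      set HH := h (W (X (u, t)) r) with hHdef
      field_simp
      ring
    rw [heq] at hd
    exact hd
  have hgcont : ContinuousOn (fun t =>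
      (h (w (u, t)) - 2 * fderiv ℝ (fun zz => W zz ‖fderiv ℝ X (u, t) (0, 1)‖) (X (u, t))
          (fderiv ℝ X (u, t) (0, 1)))
        / (Wv W (X (u, t)) ‖fderiv ℝ X (u, t) (0, 1)‖ * ‖fderiv ℝ X (u, t) (0, 1)‖)) I := by
    have hA' : ContinuousOn (fun s =>
        (h (w (u, s)) - 2 * fderiv ℝ WJ (X (u, s), ‖fderiv ℝ X (u, s) (0, 1)‖)
            (fderiv ℝ X (u, s) (0, 1), 0))
          / (fderiv ℝ WJ (X (u, s), ‖fderiv ℝ X (u, s) (0, 1)‖) (0, 1)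
            * ‖fderiv ℝ X (u, s) (0, 1)‖)) I := by
      intro t ht
      have hp : ((u, t) : EuclideanSpace ℝ (Fin (n-1)) × ℝ) ∈ U ×ˢ I := hmemO t ht
      have c1 : ContinuousAt (fun s : ℝ =>
          ((u, s) : EuclideanSpace ℝ (Fin (n-1)) × ℝ)) t := (Continuous.prodMk_right u).continuousAt
      have cV : ContinuousAt (fun s : ℝ => fderiv ℝ X (u, s) (0, 1)) t := by
        have h1 : ContinuousAt ((fun q => fderiv ℝ X q (0, 1)) ∘ (Prod.mk u)) t :=
          ContinuousAt.comp (by exact (hVC _ hp).continuousAt) c1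
        exact h1
      have cX : ContinuousAt (fun s : ℝ => X (u, s)) t := by
        have h1 : ContinuousAt (X ∘ (Prod.mk u)) t :=
          ContinuousAt.comp (by exact (hXC _ hp).continuousAt) c1
        exact h1
      have cr : ContinuousAt (fun s : ℝ => ‖fderiv ℝ X (u, s) (0, 1)‖) t := cV.norm
      have cG : ContinuousAt (fun s : ℝ =>
          ((X (u, s), ‖fderiv ℝ X (u, s) (0, 1)‖) : EuclideanSpace ℝ (Fin n) × ℝ)) t :=
        cX.prodMk cr
      have cDW : ContinuousAt (fun s : ℝ =>
          fderiv ℝ WJ (X (u, s), ‖fderiv ℝ X (u, s) (0, 1)‖)) t := by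
        have h1 : ContinuousAt ((fderiv ℝ WJ) ∘ (fun s : ℝ =>
            ((X (u, s), ‖fderiv ℝ X (u, s) (0, 1)‖) : EuclideanSpace ℝ (Fin n) × ℝ))) t :=
          ContinuousAt.comp
            (by exact ((hWJC _ (hGmem _ hp)).fderiv_right (m := (⊤ : ℕ∞)) (by simp)).continuousAt) cG
        exact h1
      have cT : ContinuousAt (fun s : ℝ =>
          fderiv ℝ WJ (X (u, s), ‖fderiv ℝ X (u, s) (0, 1)‖)
            (fderiv ℝ X (u, s) (0, 1), 0)) t := by
        have h1 : ContinuousAt ((fun p : ((EuclideanSpace ℝ (Fin n) × ℝ) →L[ℝ] ℝ)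
              × (EuclideanSpace ℝ (Fin n) × ℝ) => p.1 p.2) ∘ (fun s : ℝ =>
            (fderiv ℝ WJ (X (u, s), ‖fderiv ℝ X (u, s) (0, 1)‖),
              (fderiv ℝ X (u, s) (0, 1), (0:ℝ))))) t :=
          ContinuousAt.comp (by exact isBoundedBilinearMap_apply.continuous.continuousAt)
            (cDW.prodMk (cV.prodMk continuousAt_const))
        exact h1
      have cWv : ContinuousAt (fun s : ℝ =>
          fderiv ℝ WJ (X (u, s), ‖fderiv ℝ X (u, s) (0, 1)‖)
            ((0 : EuclideanSpace ℝ (Fin n)), (1:ℝ))) t := by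
        have h1 : ContinuousAt ((fun p : ((EuclideanSpace ℝ (Fin n) × ℝ) →L[ℝ] ℝ)
              × (EuclideanSpace ℝ (Fin n) × ℝ) => p.1 p.2) ∘ (fun s : ℝ =>
            (fderiv ℝ WJ (X (u, s), ‖fderiv ℝ X (u, s) (0, 1)‖),
              (((0 : EuclideanSpace ℝ (Fin n)), (1:ℝ)) : EuclideanSpace ℝ (Fin n) × ℝ)))) t :=
          ContinuousAt.comp (by exact isBoundedBilinearMap_apply.continuous.continuousAt)
            (cDW.prodMk continuousAt_const)
        exact h1
      have ch : ContinuousAt (fun s : ℝ => h (w (u, s))) t := by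
        have h1 : ContinuousAt (h ∘ (w ∘ (Prod.mk u))) t :=
          ContinuousAt.comp (by exact hh.continuous.continuousAt)
            (ContinuousAt.comp (by exact (hwC _ hp).continuousAt) c1)
        exact h1
      have hden : fderiv ℝ WJ (X (u, t), ‖fderiv ℝ X (u, t) (0, 1)‖)
          ((0 : EuclideanSpace ℝ (Fin n)), (1:ℝ)) * ‖fderiv ℝ X (u, t) (0, 1)‖ ≠ 0 := by
        apply mul_ne_zero
        · rw [← hWveq _ (hGmem _ hp)]
          exact hWv _ (hmem u hu t ht) _ (hrpos _ hp)
        · exact ne_of_gt (hrpos _ hp)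
      exact (ContinuousAt.div (ch.sub (continuousAt_const.mul cT))
        (cWv.mul cr) hden).continuousWithinAt
    apply hA'.congr
    intro s hs
    have hp : ((u, s) : EuclideanSpace ℝ (Fin (n-1)) × ℝ) ∈ U ×ˢ I := hmemO s hs
    have h1 := hWxeq _ (hGmem _ hp) (fderiv ℝ X (u, s) (0, 1))
    have h2 := hWveq _ (hGmem _ hp)
    beta_reduce
    rw [← h1, ← h2]
  have hg0 : g 0 = 0 := by
    have hp0 : ((u, 0) : EuclideanSpace ℝ (Fin (n-1)) × ℝ) ∈ U ×ˢ I := hmemO 0 h0I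
    have hev : (fun u' => X (u', (0:ℝ))) =ᶠ[nhds u] (fun _ => p₀) := by
      filter_upwards [hU.mem_nhds hu] with u' hu' using hinit u' hu'
    have h3 := (hasFDerivAt_partial_fst (hXd _ hp0)).fderiv
    have h4 : fderiv ℝ X (u, 0) (e, 0) = 0 := by
      calc fderiv ℝ X (u, 0) (e, 0)
          = ((fderiv ℝ X (u, 0)).comp
              (ContinuousLinearMap.inl ℝ (EuclideanSpace ℝ (Fin (n-1))) ℝ)) e := rfl
        _ = fderiv ℝ (fun u' => X (u', (0:ℝ))) u e := by rw [← h3]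
        _ = 0 := by rw [hev.fderiv_eq]; simp
    have h5 : g 0 = ⟪fderiv ℝ X (u, 0) (e, 0), fderiv ℝ X (u, 0) (0, 1)⟫ := rfl
    rw [h5, h4, inner_zero_left]
  have hgzero : ∀ t ∈ I, g t = 0 := linear_ODE_zero hIconn h0I hgcont hgode hg0
  -- conclusion
  intro t ht
  have h1 : fderiv ℝ (fun u' => x u' t) u e = fderiv ℝ X (u, t) (e, 0) := by
    have := (hasFDerivAt_partial_fst (hXd (u, t) (hmemO t ht))).fderiv
    calc fderiv ℝ (fun u' => x u' t) u e
        = ((fderiv ℝ X (u, t)).comp (ContinuousLinearMap.inl ℝ (EuclideanSpace ℝ (Fin (n-1))) ℝ)) e := by rw [← this]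
      _ = fderiv ℝ X (u, t) (e, 0) := rfl
  rw [h1, hVeq (u, t) (hmemO t ht)]
  exact hgzero t ht
end

section
/- Let Ω ⊆ ℝⁿ be open, let F : Ω × (ℝⁿ∖{0}) → ℝⁿ be smooth with F(x, αv) = α²·F(x,v) for all α > 0, x ∈ Ω, v ≠ 0, and let H : Ω × (ℝⁿ∖{0}) → ℝ be smooth. Suppose x : I → Ω is a smooth curve on an open interval I with x'(t) ≠ 0 for all t and x''(t) = F(x(t), x'(t)) + H(x(t), x'(t))·x'(t)/|x'(t)| on I. Then for every t₀ ∈ I there exist an open interval J, a point s₀ ∈ J, and a smooth function φ : J → I with φ' > 0 everywhere and φ(s₀) = t₀, such that y := x∘φ satisfies y''(s) = F(y(s), y'(s)) for all s ∈ J. In other words, every trajectory of the Newtonian system with force field F + H·v/|v| is locally a regular reparametrization of a trajectory of the system with force field F. -/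
open scoped ContDiff Topology NNReal ENNReal
open Filter Set FormalMultilinearSeries

section Aux

lemma contDiffOn_antideriv {f g : ℝ → ℝ} {s : Set ℝ} (hs : IsOpen s)
    (hg : ContDiffOn ℝ ∞ g s) (hf : ∀ t ∈ s, HasDerivAt f (g t) t) :
    ContDiffOn ℝ ∞ f s := by
  have h : ContDiffOn ℝ ((∞ : WithTop ℕ∞) + 1) f s := by
    rw [contDiffOn_succ_iff_deriv_of_isOpen hs]
    refine ⟨fun t ht => (hf t ht).differentiableAt.differentiableWithinAt,
      fun h => by simp at h, ?_⟩
    exact hg.congr (fun t ht => (hf t ht).deriv)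
  simpa using h

end Aux

/-- one direction of Theorem 13.3. Every trajectory of the
Newtonian system with force field `F + H·v/|v|`, where `F` is positively homogeneous
of degree `2` in the velocity, is locally a regular reparametrization of a trajectory
of the system with force field `F`. -/
theorem stmt15 {n : ℕ} (Ω : Set (EuclideanSpace ℝ (Fin n))) (hΩ : IsOpen Ω)
    (F : EuclideanSpace ℝ (Fin n) → EuclideanSpace ℝ (Fin n) → EuclideanSpace ℝ (Fin n))
    (hFsmooth : ContDiffOn ℝ (⊤ : ℕ∞) (fun p : EuclideanSpace ℝ (Fin n) × EuclideanSpace ℝ (Fin n) =>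
      F p.1 p.2) (Ω ×ˢ {v : EuclideanSpace ℝ (Fin n) | v ≠ 0}))
    (hF : ∀ α : ℝ, 0 < α → ∀ x ∈ Ω, ∀ v : EuclideanSpace ℝ (Fin n), v ≠ 0 →
      F x (α • v) = (α ^ 2) • F x v)
    (H : EuclideanSpace ℝ (Fin n) → EuclideanSpace ℝ (Fin n) → ℝ)
    (hH : ContDiffOn ℝ (⊤ : ℕ∞) (fun p : EuclideanSpace ℝ (Fin n) × EuclideanSpace ℝ (Fin n) =>
      H p.1 p.2) (Ω ×ˢ {v : EuclideanSpace ℝ (Fin n) | v ≠ 0}))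
    (I : Set ℝ) (hI : IsOpen I) (hIconn : I.OrdConnected)
    (x : ℝ → EuclideanSpace ℝ (Fin n)) (hx : ContDiffOn ℝ (⊤ : ℕ∞) x I)
    (hmem : ∀ t ∈ I, x t ∈ Ω)
    (hne : ∀ t ∈ I, deriv x t ≠ 0)
    (hode : ∀ t ∈ I, deriv (deriv x) t
      = F (x t) (deriv x t) + (H (x t) (deriv x t) / ‖deriv x t‖) • deriv x t) :
    ∀ t₀ ∈ I, ∃ (c d s₀ : ℝ) (φ : ℝ → ℝ),
      s₀ ∈ Set.Ioo c d ∧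
      ContDiffOn ℝ (⊤ : ℕ∞) φ (Set.Ioo c d) ∧
      (∀ s ∈ Set.Ioo c d, 0 < deriv φ s) ∧
      (∀ s ∈ Set.Ioo c d, φ s ∈ I) ∧
      φ s₀ = t₀ ∧
      (∀ s ∈ Set.Ioo c d,
        deriv (deriv (x ∘ φ)) s = F ((x ∘ φ) s) (deriv (x ∘ φ) s)) := by
  intro t₀ ht₀
  have hProdOpen : IsOpen (Ω ×ˢ {v : EuclideanSpace ℝ (Fin n) | v ≠ 0}) :=
    hΩ.prod isOpen_ne
  have hxA : ContDiffOn ℝ ∞ x I := hx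
  have hx'A : ContDiffOn ℝ ∞ (deriv x) I := hxA.deriv_of_isOpen hI (by simp)
  have hd1 : ∀ t ∈ I, HasDerivAt x (deriv x t) t :=
    fun t ht => ((hxA.contDiffAt (hI.mem_nhds ht)).differentiableAt (by simp)).hasDerivAt
  have hd2 : ∀ t ∈ I, HasDerivAt (deriv x) (deriv (deriv x) t) t :=
    fun t ht => ((hx'A.contDiffAt (hI.mem_nhds ht)).differentiableAt (by simp)).hasDerivAt
  have hHA : ContDiffOn ℝ ∞ (fun p : EuclideanSpace ℝ (Fin n) × EuclideanSpace ℝ (Fin n) =>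
      H p.1 p.2) (Ω ×ˢ {v : EuclideanSpace ℝ (Fin n) | v ≠ 0}) := hH
  set g : ℝ → ℝ := fun t => H (x t) (deriv x t) / ‖deriv x t‖ with hgdef
  have hgA : ContDiffOn ℝ ∞ g I := by
    intro t ht
    have h1 : ContDiffAt ℝ ∞ ((fun p : EuclideanSpace ℝ (Fin n) × EuclideanSpace ℝ (Fin n) =>
        H p.1 p.2) ∘ (fun t => (x t, deriv x t))) t :=
      ContDiffAt.comp (f := fun t => (x t, deriv x t)) t
        (hHA.contDiffAt (hProdOpen.mem_nhds ⟨hmem t ht, hne t ht⟩))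
        ((hxA.contDiffAt (hI.mem_nhds ht)).prodMk (hx'A.contDiffAt (hI.mem_nhds ht)))
    have h2 : ContDiffAt ℝ ∞ (fun t => ‖deriv x t‖) t :=
      (contDiffAt_norm ℝ (hne t ht)).comp t (hx'A.contDiffAt (hI.mem_nhds ht))
    exact (h1.div h2 (norm_ne_zero_iff.2 (hne t ht))).contDiffWithinAt
  have hgC : ContinuousOn g I := hgA.continuousOn
  have FTC : ∀ (h : ℝ → ℝ), ContinuousOn h I → ∀ t ∈ I,
      HasDerivAt (fun s => ∫ u in t₀..s, h u) (h t) t := by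
    intro h hc t ht
    have hint : IntervalIntegrable h MeasureTheory.volume t₀ t :=
      (hc.mono (hIconn.uIcc_subset ht₀ ht)).intervalIntegrable
    exact intervalIntegral.integral_hasDerivAt_right hint
      (hc.stronglyMeasurableAtFilter hI t ht)
      ((hc t ht).continuousAt (hI.mem_nhds ht))
  set G : ℝ → ℝ := fun s => ∫ u in t₀..s, g u with hGdef
  have hGd : ∀ t ∈ I, HasDerivAt G (g t) t := FTC g hgC
  have hGA : ContDiffOn ℝ ∞ G I := contDiffOn_antideriv hI hgA hGd
  set Ee : ℝ → ℝ := fun t => Real.exp (G t) with hEdef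
  have hEA : ContDiffOn ℝ ∞ Ee I := hGA.exp
  have hEd : ∀ t ∈ I, HasDerivAt Ee (g t * Ee t) t := fun t ht => by
    simpa [hEdef, mul_comm] using (hGd t ht).exp
  have hEpos : ∀ t, 0 < Ee t := fun t => Real.exp_pos _
  have hEC : ContinuousOn Ee I := hEA.continuousOn
  set ψ : ℝ → ℝ := fun s => ∫ u in t₀..s, Ee u with hψdef
  have hψd : ∀ t ∈ I, HasDerivAt ψ (Ee t) t := FTC Ee hEC
  have hψA : ContDiffOn ℝ ∞ ψ I := contDiffOn_antideriv hI hEA hψd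
  have hψ0 : ψ t₀ = 0 := intervalIntegral.integral_same
  have hG0 : G t₀ = 0 := intervalIntegral.integral_same
  have hE0 : Ee t₀ = 1 := by rw [hEdef]; simp [hG0]
  -- inverse function theorem
  have hψcd : ContDiffAt ℝ (⊤ : ℕ∞) ψ t₀ := hψA.contDiffAt (hI.mem_nhds ht₀)
  have hfd : HasFDerivAt ψ
      ((ContinuousLinearEquiv.refl ℝ ℝ : ℝ ≃L[ℝ] ℝ) : ℝ →L[ℝ] ℝ) t₀ := by
    have h := hψd t₀ ht₀
    rw [hE0] at h
    have h2 := h.hasFDerivAt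
    refine h2.congr_fderiv ?_
    ext w
    simp
  set φ : ℝ → ℝ := hψcd.localInverse hfd (by simp) with hφdef
  have hstrict := hψcd.hasStrictFDerivAt' hfd (by simp)
  have hφ0 : φ 0 = t₀ := by
    have h := hψcd.localInverse_apply_image hfd (by simp)
    rwa [hψ0] at h
  have hφcd : ContDiffAt ℝ (⊤ : ℕ∞) φ 0 := by
    have h := hψcd.to_localInverse hfd (by simp)
    rwa [hψ0] at h
  have hright : ∀ᶠ s in 𝓝 (0 : ℝ), ψ (φ s) = s := by
    have h : ∀ᶠ s in 𝓝 (ψ t₀), ψ (φ s) = s := hstrict.eventually_right_inverse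
    rwa [hψ0] at h
  have hmemI : ∀ᶠ s in 𝓝 (0 : ℝ), φ s ∈ I :=
    hφcd.continuousAt.eventually_mem (by rw [hφ0]; exact hI.mem_nhds ht₀)
  obtain ⟨u, hu_nhds, hφu⟩ : ∃ u ∈ 𝓝 (0 : ℝ), ContDiffOn ℝ (⊤ : ℕ∞) φ u := by
    set P := hψcd.toOpenPartialHomeomorph ψ hfd (by simp) with hP
    have htgt : P.target ∈ 𝓝 (0 : ℝ) := by
      rw [← hψ0]
      exact P.open_target.mem_nhds (hψcd.image_mem_toOpenPartialHomeomorph_target hfd (by simp))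
    have hφloc : ∀ᶠ s in 𝓝 (0 : ℝ), ContDiffAt ℝ (⊤ : ℕ∞) φ s := by
      filter_upwards [htgt, hmemI] with s hs hsI
      exact P.contDiffAt_symm_deriv (hEpos _).ne' hs (hψd _ hsI)
        (hψA.contDiffAt (hI.mem_nhds hsI))
    exact ⟨_, hφloc, fun s (hs : ContDiffAt ℝ (⊤ : ℕ∞) φ s) => hs.contDiffWithinAt⟩
  have hS : {s : ℝ | ψ (φ s) = s ∧ φ s ∈ I} ∩ u ∈ 𝓝 (0 : ℝ) :=
    Filter.inter_mem (hright.and hmemI) hu_nhds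
  obtain ⟨c, d, h0cd, hcd⟩ := mem_nhds_iff_exists_Ioo_subset.1 hS
  set J : Set ℝ := Set.Ioo c d with hJdef
  have hJopen : IsOpen J := isOpen_Ioo
  have hJinv : ∀ s ∈ J, ψ (φ s) = s := fun s hs => ((hcd hs).1).1
  have hJI : ∀ s ∈ J, φ s ∈ I := fun s hs => ((hcd hs).1).2
  have hφJ : ContDiffOn ℝ (⊤ : ℕ∞) φ J := hφu.mono (fun s hs => (hcd hs).2)
  -- derivative of φ
  have hφdiff : ∀ s ∈ J, HasDerivAt φ (deriv φ s) s := by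
    intro s hs
    exact (((hφJ.differentiableOn (by simp)).differentiableAt
      (hJopen.mem_nhds hs))).hasDerivAt
  have hφval : ∀ s ∈ J, deriv φ s = (Ee (φ s))⁻¹ := by
    intro s hs
    have hcomp : HasDerivAt (ψ ∘ φ) (Ee (φ s) * deriv φ s) s := by
      have := HasDerivAt.scomp_of_eq s (hψd (φ s) (hJI s hs)) (hφdiff s hs) rfl
      simpa [smul_eq_mul, mul_comm] using this
    have hev : (ψ ∘ φ) =ᶠ[𝓝 s] id := by
      filter_upwards [hJopen.eventually_mem hs] with r hr
      exact hJinv r hr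
    have hid : HasDerivAt (id : ℝ → ℝ) (Ee (φ s) * deriv φ s) s :=
      hcomp.congr_of_eventuallyEq hev.symm
    have h1 : Ee (φ s) * deriv φ s = 1 := by
      have := hid.deriv
      simpa using this.symm
    field_simp [(hEpos (φ s)).ne'] at h1 ⊢
    linarith
  have hφd' : ∀ s ∈ J, HasDerivAt φ ((Ee (φ s))⁻¹) s := by
    intro s hs
    have := hφdiff s hs
    rwa [hφval s hs] at this
  have hφpos : ∀ s ∈ J, 0 < deriv φ s := by
    intro s hs
    rw [hφval s hs]
    exact inv_pos.2 (hEpos _)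
  -- first derivative of x ∘ φ
  have hyd : ∀ s ∈ J, HasDerivAt (x ∘ φ) ((Ee (φ s))⁻¹ • deriv x (φ s)) s :=
    fun s hs => HasDerivAt.scomp_of_eq s (hd1 (φ s) (hJI s hs)) (hφd' s hs) rfl
  have hyderiv : ∀ s ∈ J, deriv (x ∘ φ) s = (Ee (φ s))⁻¹ • deriv x (φ s) :=
    fun s hs => (hyd s hs).deriv
  refine ⟨c, d, 0, φ, h0cd, hφJ, hφpos, hJI, hφ0, ?_⟩
  intro s hs
  set t : ℝ := φ s with htdef
  have htI : t ∈ I := hJI s hs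
  have hEne : Ee t ≠ 0 := (hEpos t).ne'
  -- second derivative
  have hev2 : deriv (x ∘ φ) =ᶠ[𝓝 s] fun r => (Ee (φ r))⁻¹ • deriv x (φ r) := by
    filter_upwards [hJopen.eventually_mem hs] with r hr
    exact hyderiv r hr
  have hA : HasDerivAt (fun r => Ee (φ r)) (g t) s := by
    have h0 : HasDerivAt (Ee ∘ φ) ((Ee t)⁻¹ • (g t * Ee t)) s :=
      HasDerivAt.scomp_of_eq s (hEd t htI) (hφd' s hs) rfl
    have := h0
    have h2 : (Ee t)⁻¹ • (g t * Ee t) = g t := by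
      rw [smul_eq_mul]; field_simp
    rwa [h2] at this
  have hAinv : HasDerivAt (fun r => (Ee (φ r))⁻¹) (-(g t) / Ee t ^ 2) s := by
    exact hA.inv hEne
  have hB : HasDerivAt (fun r => deriv x (φ r)) ((Ee t)⁻¹ • deriv (deriv x) t) s :=
    HasDerivAt.scomp_of_eq s (hd2 t htI) (hφd' s hs) rfl
  have hw := hAinv.smul hB
  have hdd : deriv (deriv (x ∘ φ)) s
      = (Ee t)⁻¹ • (Ee t)⁻¹ • deriv (deriv x) t + (-g t / Ee t ^ 2) • deriv x t := by
    rw [hev2.deriv_eq]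
    exact hw.deriv
  have hodet : deriv (deriv x) t = F (x t) (deriv x t) + g t • deriv x t := hode t htI
  have hFh : F (x t) ((Ee t)⁻¹ • deriv x t) = ((Ee t)⁻¹ ^ 2) • F (x t) (deriv x t) :=
    hF _ (inv_pos.2 (hEpos t)) _ (hmem t htI) _ (hne t htI)
  rw [hdd, Function.comp_apply, hyderiv s hs, ← htdef, hFh, hodet]
  match_scalars <;> field_simp <;> ring
end

section
/- Let V be a real vector space, let B : V × V → V be a symmetric bilinear map, and let λ : V → ℝ be a function with λ(0) = 0 such that B(v,v) = λ(v)·v for every v ∈ V. Then λ is linear, i.e. λ(α·v) = α·λ(v) and λ(v₁ + v₂) = λ(v₁) + λ(v₂) for all α ∈ ℝ and all v, v₁, v₂ ∈ V. -/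
/-!
Comparing `B(αv, αv) = α² λ(v) v` with `λ(αv) αv` gives homogeneity. For additivity, the
parallelogram identity `K(v₁+v₂) + K(v₁-v₂) = 2K(v₁) + 2K(v₂)` of `K(v) = B(v,v)` becomes a
linear relation between `v₁` and `v₂`; when they are independent its two coefficients vanish, and
adding them gives `λ(v₁+v₂) = λ(v₁) + λ(v₂)`. When they are dependent, homogeneity suffices.
-/

namespace LinearMap

theorem parallelogram_law {R M N : Type*} [CommSemiring R] [AddCommGroup M]
    [AddCommGroup N] [Module R M] [Module R N] (B : M →ₗ[R] M →ₗ[R] N) (x y : M) :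
    B (x + y) (x + y) + B (x - y) (x - y) = 2 • B x x + 2 • B y y := by
  simp only [map_add, map_sub, LinearMap.add_apply, LinearMap.sub_apply]
  abel

variable {K V : Type*} [Field K] [AddCommGroup V] [Module K V]
  {B : V →ₗ[K] V →ₗ[K] V} {lam : V → K}

theorem diag_coeff_smul_of_ne_zero (hB : ∀ v, B v v = lam v • v) {α : K} {v : V}
    (hα : α ≠ 0) (hv : v ≠ 0) : lam (α • v) = α * lam v := by
  have h : (lam (α • v) * α) • v = (α * (α * lam v)) • v := by
    rw [mul_smul, ← hB]
    simp only [map_smul, LinearMap.smul_apply, hB, smul_smul]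
  have h' : α * lam (α • v) = α * (α * lam v) := by
    rw [mul_comm]
    exact smul_left_injective K hv h
  exact mul_left_cancel₀ hα h'

theorem diag_coeff_smul (hB : ∀ v, B v v = lam v • v) (h0 : lam 0 = 0) (α : K) (v : V) :
    lam (α • v) = α * lam v := by
  rcases eq_or_ne α 0 with rfl | hα
  · simp [h0]
  rcases eq_or_ne v 0 with rfl | hv
  · simp [h0]
  exact diag_coeff_smul_of_ne_zero hB hα hv

theorem diag_coeff_add_of_linearIndependent [NeZero (2 : K)] (hB : ∀ v, B v v = lam v • v)
    {v₁ v₂ : V} (hli : LinearIndependent K ![v₁, v₂]) :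
    lam (v₁ + v₂) = lam v₁ + lam v₂ := by
  have hpar := B.parallelogram_law v₁ v₂
  simp only [hB] at hpar
  have hrel : (lam (v₁ + v₂) + lam (v₁ - v₂) - 2 * lam v₁) • v₁
      + (lam (v₁ + v₂) - lam (v₁ - v₂) - 2 * lam v₂) • v₂ = 0 := by
    linear_combination (norm := module) hpar
  obtain ⟨h₁, h₂⟩ := LinearIndependent.pair_iff.mp hli _ _ hrel
  have h : 2 * lam (v₁ + v₂) = 2 * (lam v₁ + lam v₂) := by linear_combination h₁ + h₂
  exact mul_left_cancel₀ two_ne_zero h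

theorem diag_coeff_add [NeZero (2 : K)] (hB : ∀ v, B v v = lam v • v) (h0 : lam 0 = 0)
    (v₁ v₂ : V) : lam (v₁ + v₂) = lam v₁ + lam v₂ := by
  rcases eq_or_ne v₁ 0 with rfl | hv₁
  · simp [h0]
  by_cases hli : LinearIndependent K ![v₁, v₂]
  · exact diag_coeff_add_of_linearIndependent hB hli
  obtain ⟨c, rfl⟩ : ∃ c : K, c • v₁ = v₂ := by
    simpa [LinearIndependent.pair_iff' hv₁] using hli
  rw [show v₁ + c • v₁ = (1 + c) • v₁ by module, diag_coeff_smul hB h0, diag_coeff_smul hB h0]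
  ring

end LinearMap

theorem stmt16_general (V : Type*) [AddCommGroup V] [Module ℝ V]
    (B : V →ₗ[ℝ] V →ₗ[ℝ] V)
    (lam : V → ℝ) (hlam0 : lam 0 = 0)
    (hB : ∀ v : V, B v v = lam v • v) :
    (∀ (α : ℝ) (v : V), lam (α • v) = α * lam v) ∧
    (∀ v₁ v₂ : V, lam (v₁ + v₂) = lam v₁ + lam v₂) :=
  ⟨LinearMap.diag_coeff_smul hB hlam0, LinearMap.diag_coeff_add hB hlam0⟩

/-- step (13.16)–(13.17) in the proof of Theorem 13.2. If a
symmetric bilinear map `B : V × V → V` satisfies `B(v,v) = λ(v)·v` for a function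
`λ` with `λ(0) = 0`, then `λ` is linear. -/
theorem stmt16 (V : Type*) [AddCommGroup V] [Module ℝ V]
    (B : V →ₗ[ℝ] V →ₗ[ℝ] V) (hBsymm : ∀ v w : V, B v w = B w v)
    (lam : V → ℝ) (hlam0 : lam 0 = 0)
    (hB : ∀ v : V, B v v = lam v • v) :
    (∀ (α : ℝ) (v : V), lam (α • v) = α * lam v) ∧
    (∀ v₁ v₂ : V, lam (v₁ + v₂) = lam v₁ + lam v₂) :=
  stmt16_general V B lam hlam0 hB
end

section
/- Let n ≥ 3, let B : ℝⁿ × ℝⁿ → ℝⁿ be a symmetric bilinear map, and let U : (0,∞) → ℝⁿ and λ : ℝⁿ∖{0} → ℝ be functions such that B(v,v) = |v|²·U(|v|) + λ(v)·v for every v ≠ 0 (Euclidean norm |·|). Then U is constant: U(s) = U(t) for all s, t > 0. -/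
/-!
Scaling `v` by `c > 0` multiplies `B(v,v)` by `c²`, so comparing the decomposition at `v` and at
`c • v` shows that `U(c|v|) - U(|v|)` is a multiple of `v`. Any two radii are realised along two
linearly independent directions, and a vector lying on both lines is zero.
-/

open Module Submodule

section Decomposition

variable {E : Type*} [NormedAddCommGroup E] [NormedSpace ℝ E]
  {B : E →ₗ[ℝ] E →ₗ[ℝ] E} {U : ℝ → E} {lam : E → ℝ}

theorem sub_mem_span_singleton_of_bilin_diag_eq_norm
    (hB : ∀ v : E, v ≠ 0 → B v v = (‖v‖ ^ 2) • U ‖v‖ + lam v • v)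
    {v : E} (hv : v ≠ 0) {t : ℝ} (ht : 0 < t) : U t - U ‖v‖ ∈ ℝ ∙ v := by
  have hvpos : 0 < ‖v‖ := norm_pos_iff.mpr hv
  set c := t / ‖v‖
  have hc : 0 < c := div_pos ht hvpos
  have hcv : ‖c • v‖ = t := by
    rw [norm_smul, Real.norm_of_nonneg hc.le, div_mul_cancel₀ _ hvpos.ne']
  have hc2 : c ^ 2 * ‖v‖ ^ 2 = t ^ 2 := by
    rw [← mul_pow, ← hcv, norm_smul, Real.norm_of_nonneg hc.le]
  have hscaled : B (c • v) (c • v) = (c ^ 2) • B v v := by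
    simp only [map_smul, LinearMap.smul_apply, smul_smul, sq]
  rw [hB _ (smul_ne_zero hc.ne' hv), hB v hv, hcv, smul_add, smul_smul, smul_smul, hc2,
    smul_smul] at hscaled
  have hdiff : (t ^ 2) • (U t - U ‖v‖) = (c ^ 2 * lam v - lam (c • v) * c) • v := by
    rw [smul_sub, sub_smul, ← smul_smul]
    linear_combination (norm := module) hscaled
  rw [mem_span_singleton]
  exact ⟨(t ^ 2)⁻¹ * (c ^ 2 * lam v - lam (c • v) * c), by
    rw [mul_smul, ← hdiff, inv_smul_smul₀ (pow_ne_zero 2 ht.ne')]⟩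

theorem sub_mem_span_singleton_of_bilin_diag_eq
    (hB : ∀ v : E, v ≠ 0 → B v v = (‖v‖ ^ 2) • U ‖v‖ + lam v • v)
    {v : E} (hv : v ≠ 0) {s t : ℝ} (hs : 0 < s) (ht : 0 < t) : U t - U s ∈ ℝ ∙ v := by
  have hvpos : 0 < ‖v‖ := norm_pos_iff.mpr hv
  have hnorm : ‖(s / ‖v‖) • v‖ = s := by
    rw [norm_smul, Real.norm_of_nonneg (div_pos hs hvpos).le, div_mul_cancel₀ _ hvpos.ne']
  have hmem := sub_mem_span_singleton_of_bilin_diag_eq_norm hB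
    (smul_ne_zero (div_pos hs hvpos).ne' hv) ht
  rw [hnorm] at hmem
  exact span_singleton_smul_le (R := ℝ) (s / ‖v‖) v hmem

theorem eq_of_bilin_diag_eq_of_one_lt_finrank (hE : 1 < finrank ℝ E)
    (hB : ∀ v : E, v ≠ 0 → B v v = (‖v‖ ^ 2) • U ‖v‖ + lam v • v)
    {s t : ℝ} (hs : 0 < s) (ht : 0 < t) : U s = U t := by
  have : FiniteDimensional ℝ E := Module.finite_of_finrank_pos (by omega)
  let b := finBasis ℝ E
  let i : Fin (finrank ℝ E) := ⟨0, by omega⟩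
  let j : Fin (finrank ℝ E) := ⟨1, hE⟩
  have hdisj : Disjoint (ℝ ∙ b i) (ℝ ∙ b j) := by
    simp_rw [← Set.image_singleton]
    exact b.linearIndependent.disjoint_span_image (by simp [i, j])
  have hzero := disjoint_def.1 hdisj _
    (sub_mem_span_singleton_of_bilin_diag_eq hB (b.ne_zero i) hs ht)
    (sub_mem_span_singleton_of_bilin_diag_eq hB (b.ne_zero j) hs ht)
  exact (sub_eq_zero.1 hzero).symm

end Decomposition

theorem stmt17_general (n : ℕ) (hn : 3 ≤ n)
    (B : EuclideanSpace ℝ (Fin n) →ₗ[ℝ] EuclideanSpace ℝ (Fin n) →ₗ[ℝ] EuclideanSpace ℝ (Fin n))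
    (U : ℝ → EuclideanSpace ℝ (Fin n)) (lam : EuclideanSpace ℝ (Fin n) → ℝ)
    (hB : ∀ v : EuclideanSpace ℝ (Fin n), v ≠ 0 →
      B v v = (‖v‖ ^ 2) • U ‖v‖ + lam v • v) :
    ∀ s t : ℝ, 0 < s → 0 < t → U s = U t := fun _ _ hs ht =>
  eq_of_bilin_diag_eq_of_one_lt_finrank (by rw [finrank_euclideanSpace_fin]; omega) hB hs ht

/-- step (13.11)–(13.14) in the proof of Theorem 13.2. In dimension
`n ≥ 3`, if a symmetric bilinear map `B` on `ℝⁿ` decomposes as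
`B(v,v) = |v|²·U(|v|) + λ(v)·v` for all `v ≠ 0`, then the spherically symmetric
vector `U` is constant on `(0, ∞)`. -/
theorem stmt17 (n : ℕ) (hn : 3 ≤ n)
    (B : EuclideanSpace ℝ (Fin n) →ₗ[ℝ] EuclideanSpace ℝ (Fin n) →ₗ[ℝ] EuclideanSpace ℝ (Fin n))
    (hBsymm : ∀ v w : EuclideanSpace ℝ (Fin n), B v w = B w v)
    (U : ℝ → EuclideanSpace ℝ (Fin n)) (lam : EuclideanSpace ℝ (Fin n) → ℝ)
    (hB : ∀ v : EuclideanSpace ℝ (Fin n), v ≠ 0 →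
      B v v = (‖v‖ ^ 2) • U ‖v‖ + lam v • v) :
    ∀ s t : ℝ, 0 < s → 0 < t → U s = U t :=
  stmt17_general n hn B U lam hB
end

section
/- Let n ≥ 3, let B : ℝⁿ × ℝⁿ → ℝⁿ be a symmetric bilinear map, and let U : (0,∞) → ℝⁿ be a function such that for every v ≠ 0 the vector B(v,v) − |v|²·U(|v|) is a scalar multiple of v. Then there exist a constant vector U₀ ∈ ℝⁿ and a vector Λ ∈ ℝⁿ such that B(v,v) = |v|²·U₀ + ⟨Λ,v⟩·v for all v ∈ ℝⁿ; in particular U(s) = U₀ for all s > 0. -/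
open scoped RealInnerProductSpace

noncomputable def LM {n : ℕ}
    (B : EuclideanSpace ℝ (Fin n) →ₗ[ℝ] EuclideanSpace ℝ (Fin n) →ₗ[ℝ] EuclideanSpace ℝ (Fin n))
    (U₀ : EuclideanSpace ℝ (Fin n)) (k : Fin n) :
    EuclideanSpace ℝ (Fin n) →ₗ[ℝ] ℝ where
  toFun v := 2 * (B (EuclideanSpace.single k 1) v) k
      - (U₀ k + (B (EuclideanSpace.single k 1) (EuclideanSpace.single k 1)) k) * v k
  map_add' v w := by simp [map_add, PiLp.add_apply]; ring
  map_smul' c v := by simp [map_smul, PiLp.smul_apply]; ring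

lemma LM_diag {n : ℕ}
    (B : EuclideanSpace ℝ (Fin n) →ₗ[ℝ] EuclideanSpace ℝ (Fin n) →ₗ[ℝ] EuclideanSpace ℝ (Fin n))
    (hBsymm : ∀ v w : EuclideanSpace ℝ (Fin n), B v w = B w v)
    (U₀ : EuclideanSpace ℝ (Fin n)) (k : Fin n)
    (hz : ∀ h : EuclideanSpace ℝ (Fin n), h k = 0 → (B h h) k = (⟪h, h⟫) * U₀ k)
    (v : EuclideanSpace ℝ (Fin n)) :
    (B v v) k = ⟪v, v⟫ * U₀ k + v k * LM B U₀ k v := by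
  set a : ℝ := v k with ha
  set ek : EuclideanSpace ℝ (Fin n) := EuclideanSpace.single k 1 with hek
  set h : EuclideanSpace ℝ (Fin n) := v - a • ek with hh
  have hk0 : h k = 0 := by
    simp [hh, PiLp.sub_apply, PiLp.smul_apply, hek, EuclideanSpace.single_apply, ha]
  have hv : v = h + a • ek := by simp [hh]
  have hBe : (B ek h) k = (B h ek) k := by rw [hBsymm]
  have hih : ⟪h, ek⟫ = 0 := by
    rw [hek, EuclideanSpace.inner_single_right]; simp [hk0]
  have hie : ⟪ek, ek⟫ = (1:ℝ) := by
    rw [hek, EuclideanSpace.inner_single_right]; simp [EuclideanSpace.single_apply]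
  have hiv : ⟪v, v⟫ = ⟪h, h⟫ + 2 * a * ⟪h, ek⟫ + a ^ 2 * ⟪ek, ek⟫ := by
    rw [hv, real_inner_add_add_self]
    simp only [real_inner_smul_left, real_inner_smul_right]
    ring
  have hBvv : (B v v) k = (B h h) k + 2 * a * (B h ek) k + a ^ 2 * (B ek ek) k := by
    conv_lhs => rw [hv]
    simp only [map_add, map_smul, LinearMap.add_apply, LinearMap.smul_apply, PiLp.add_apply, PiLp.smul_apply, hBe, smul_eq_mul]
    ring
  have hBev : (B ek v) k = (B h ek) k + a * (B ek ek) k := by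
    conv_lhs => rw [hv]
    rw [hBsymm]
    simp only [map_add, map_smul, LinearMap.add_apply, LinearMap.smul_apply,
      PiLp.add_apply, PiLp.smul_apply, smul_eq_mul, hBsymm ek h]
  have hLM : LM B U₀ k v = 2 * (B ek v) k - (U₀ k + (B ek ek) k) * a := rfl
  rw [hBvv, hiv, hz h hk0, hih, hie, hLM, hBev]
  ring

/-- structural conclusion (13.10)–(13.18) in the proof of
Theorem 13.2. In dimension `n ≥ 3`, if for every `v ≠ 0` the vector
`B(v,v) − |v|²·U(|v|)` is proportional to `v`, then `B(v,v) = |v|²·U₀ + ⟪Λ,v⟫·v`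
with constant vectors `U₀`, `Λ`; in particular `U` is constant on `(0, ∞)`. -/
theorem stmt18 (n : ℕ) (hn : 3 ≤ n)
    (B : EuclideanSpace ℝ (Fin n) →ₗ[ℝ] EuclideanSpace ℝ (Fin n) →ₗ[ℝ] EuclideanSpace ℝ (Fin n))
    (hBsymm : ∀ v w : EuclideanSpace ℝ (Fin n), B v w = B w v)
    (U : ℝ → EuclideanSpace ℝ (Fin n))
    (hB : ∀ v : EuclideanSpace ℝ (Fin n), v ≠ 0 →
      ∃ c : ℝ, B v v = (‖v‖ ^ 2) • U ‖v‖ + c • v) :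
    ∃ U₀ Λ : EuclideanSpace ℝ (Fin n),
      (∀ v : EuclideanSpace ℝ (Fin n), B v v = (‖v‖ ^ 2) • U₀ + ⟪Λ, v⟫ • v) ∧
      (∀ s : ℝ, 0 < s → U s = U₀) := by
  classical
  set i0 : Fin n := ⟨0, by omega⟩ with hi0
  set i1 : Fin n := ⟨1, by omega⟩ with hi1
  have hi01 : i0 ≠ i1 := by simp [hi0, hi1]
  -- Step 1 : U is constant on (0,∞)
  have hUconst : ∀ s : ℝ, 0 < s → U s = U 1 := by
    intro s hs
    have key : ∀ i : Fin n, ∃ t : ℝ, ∀ j, U s j - U 1 j = t * EuclideanSpace.single i (1:ℝ) j := by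
      intro i
      set u : EuclideanSpace ℝ (Fin n) := EuclideanSpace.single i 1 with hu'
      have hu : ‖u‖ = 1 := by simp [hu', EuclideanSpace.norm_single]
      have hune : u ≠ 0 := by intro h; rw [h] at hu; simp at hu
      obtain ⟨c0, h0⟩ := hB u hune
      rw [hu, one_pow, one_smul] at h0
      obtain ⟨c1, h1⟩ := hB (s • u) (smul_ne_zero hs.ne' hune)
      have hns : ‖s • u‖ = s := by
        rw [norm_smul, hu, mul_one, Real.norm_eq_abs, abs_of_pos hs]
      rw [hns] at h1
      have h1' : (s * s) • B u u = s ^ 2 • U s + (c1 * s) • u := by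
        have e1 : B (s • u) (s • u) = (s * s) • B u u := by
          simp only [map_smul, LinearMap.smul_apply, smul_smul]
        have e2 : c1 • (s • u) = (c1 * s) • u := by rw [smul_smul]
        rw [← e1, ← e2]; exact h1
      refine ⟨(s * s * c0 - c1 * s) / s ^ 2, fun j => ?_⟩
      have e0 := congrArg (fun x : EuclideanSpace ℝ (Fin n) => x j) h0
      have e1 := congrArg (fun x : EuclideanSpace ℝ (Fin n) => x j) h1'
      simp only [PiLp.add_apply, PiLp.smul_apply, smul_eq_mul] at e0 e1
      have hs2 : (s:ℝ) ^ 2 ≠ 0 := pow_ne_zero 2 hs.ne'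
      have key2 : s ^ 2 * (U s j - U 1 j) = (s * s * c0 - c1 * s) * u j := by
        linear_combination (s * s) * e0 - e1
      field_simp
      apply mul_left_cancel₀ hs.ne'
      linear_combination key2
    obtain ⟨t0, ht0⟩ := key i0
    obtain ⟨t1, ht1⟩ := key i1
    ext j
    have hj0 := ht0 j
    have hj1 := ht1 j
    rw [EuclideanSpace.single_apply] at hj0 hj1
    by_cases hj : j = i0
    · rw [if_neg (by rw [hj]; exact hi01), mul_zero] at hj1
      linarith
    · rw [if_neg hj, mul_zero] at hj0
      linarith
  -- Step 2 : normalized decomposition hypothesis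
  have hc : ∀ v : EuclideanSpace ℝ (Fin n), v ≠ 0 →
      ∃ c : ℝ, B v v = (‖v‖ ^ 2) • U 1 + c • v := by
    intro v hv
    obtain ⟨c, h⟩ := hB v hv
    rw [hUconst ‖v‖ (norm_pos_iff.mpr hv)] at h
    exact ⟨c, h⟩
  -- Step 3 : vanishing on the coordinate hyperplanes
  have hz : ∀ k : Fin n, ∀ h : EuclideanSpace ℝ (Fin n), h k = 0 →
      (B h h) k = ⟪h, h⟫ * U 1 k := by
    intro k h hk
    by_cases h0 : h = 0
    · simp [h0]
    · obtain ⟨c, hch⟩ := hc h h0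
      have e := congrArg (fun x : EuclideanSpace ℝ (Fin n) => x k) hch
      simp only [PiLp.add_apply, PiLp.smul_apply, smul_eq_mul] at e
      rw [e, hk, real_inner_self_eq_norm_sq]; ring
  have hdiag : ∀ (k : Fin n) v, (B v v) k = ⟪v, v⟫ * U 1 k + v k * LM B (U 1) k v :=
    fun k v => LM_diag B hBsymm (U 1) k (hz k) v
  -- Step 4 : LM recovers the coefficient c
  have hLc : ∀ (k : Fin n) (v : EuclideanSpace ℝ (Fin n)) (c : ℝ),
      B v v = (‖v‖ ^ 2) • U 1 + c • v → v k ≠ 0 → LM B (U 1) k v = c := by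
    intro k v c hvc hk
    have h1 := hdiag k v
    rw [real_inner_self_eq_norm_sq] at h1
    have h2 := congrArg (fun x : EuclideanSpace ℝ (Fin n) => x k) hvc
    simp only [PiLp.add_apply, PiLp.smul_apply, smul_eq_mul] at h2
    exact mul_left_cancel₀ hk (by linarith)
  -- Step 5 : all LM's coincide
  set w : EuclideanSpace ℝ (Fin n) := (WithLp.equiv 2 (Fin n → ℝ)).symm (fun _ => 1) with hw'
  have hwa : ∀ m : Fin n, w m = 1 := by intro m; rfl
  have hwne : w ≠ 0 := fun h => by
    have := hwa i0; rw [h] at this; simp at this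
  obtain ⟨cw, hcw⟩ := hc w hwne
  have hwja : ∀ j m : Fin n, (w + EuclideanSpace.single j (1:ℝ)) m ≠ 0 := by
    intro j m
    rw [PiLp.add_apply, hwa, EuclideanSpace.single_apply]
    split <;> norm_num
  have hLL : ∀ k : Fin n, LM B (U 1) k = LM B (U 1) i0 := by
    intro k
    apply Module.Basis.ext (EuclideanSpace.basisFun (Fin n) ℝ).toBasis
    intro j
    rw [OrthonormalBasis.coe_toBasis, EuclideanSpace.basisFun_apply]
    have hwjne : w + EuclideanSpace.single j (1:ℝ) ≠ 0 := fun h => by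
      have := hwja j i0; rw [h] at this; simp at this
    obtain ⟨cj, hcj⟩ := hc _ hwjne
    have expand : ∀ m : Fin n, LM B (U 1) m (EuclideanSpace.single j 1) =
        LM B (U 1) m (w + EuclideanSpace.single j 1) - LM B (U 1) m w := by
      intro m; rw [map_add]; ring
    rw [expand k, expand i0, hLc k _ _ hcj (hwja j k), hLc i0 _ _ hcj (hwja j i0),
      hLc k _ _ hcw (by rw [hwa]; norm_num), hLc i0 _ _ hcw (by rw [hwa]; norm_num)]
  -- Step 6 : the Riesz vector
  set Λ : EuclideanSpace ℝ (Fin n) :=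
    (InnerProductSpace.toDual ℝ (EuclideanSpace ℝ (Fin n))).symm
      (LinearMap.toContinuousLinearMap (LM B (U 1) i0)) with hΛ'
  have hΛ : ∀ x, ⟪Λ, x⟫ = LM B (U 1) i0 x := by
    intro x
    rw [hΛ', InnerProductSpace.toDual_symm_apply]
    rfl
  refine ⟨U 1, Λ, ?_, hUconst⟩
  intro v
  by_cases hv : v = 0
  · simp [hv]
  · obtain ⟨c, hcv⟩ := hc v hv
    ext k
    have h2 := congrArg (fun x : EuclideanSpace ℝ (Fin n) => x k) hcv
    simp only [PiLp.add_apply, PiLp.smul_apply, smul_eq_mul] at h2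
    show (B v v) k = (‖v‖ ^ 2) • U 1 k + (⟪Λ, v⟫ : ℝ) • v k
    rw [smul_eq_mul, smul_eq_mul, hΛ v, ← hLL k]
    by_cases hk : v k = 0
    · rw [h2, hk]; ring
    · rw [h2, hLc k v c hcv hk]
end
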